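/- arXiv:0807.0614 — 5 statements merged into one kernel-verified Lean document; each statement's English description precedes it below -/
import Mathlib

section
/- Let N on U × V × P and Ñ on Ũ × Ṽ × P be nonlinear connections related by the transformation rule (7) under a jet coordinate change Φ. Define the adapted 1-form δp_i^a on U × V × P by δp_i^a = dp_i^a + N1^{(a)}_{(i)b} dt^b + N2^{(a)}_{(i)j} dx^j, and δp̃_j^b analogously from Ñ. Then δp_i^a transforms tensorially: for every u ∈ U × V × P and every tangent vector ξ ∈ ℝ^m × ℝ^n × P, δp_i^a(u)(ξ) = (∂t^a/∂t̃^b)(∂x̃^j/∂x^i) · δp̃_j^b(Φ(u))((DΦ)_u ξ). In particular the adapted coframe {dt^a, dx^i, δp_i^a} is dual to the adapted frame {δ/δt^a, δ/δx^i, ∂/∂p_i^a}. -/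
noncomputable section

open scoped BigOperators

/-- The local model of the dual 1-jet bundle: `(t, x, p)` with `p : Fin m → Fin n → ℝ`,
`p a i = p_i^a`.  The tangent space at any point is identified with the same product. -/
abbrev E (m n : ℕ) : Type := (Fin m → ℝ) × (Fin n → ℝ) × (Fin m → Fin n → ℝ)

/-- The natural frame vector `∂/∂t^a`. -/
def dTnat (m n : ℕ) (a : Fin m) : E m n := (Pi.single a 1, 0, 0)

/-- The natural frame vector `∂/∂x^i`. -/
def dXnat (m n : ℕ) (i : Fin n) : E m n := (0, Pi.single i 1, 0)

/-- The natural (vertical) frame vector `∂/∂p_i^a`. -/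
def dPnat (m n : ℕ) (a : Fin m) (i : Fin n) : E m n := (0, 0, Pi.single a (Pi.single i 1))

/-- A nonlinear connection: coefficient families `N1 a i b = N1^{(a)}_{(i)b}` and
`N2 a i j = N2^{(a)}_{(i)j}`. -/
structure NLC (m n : ℕ) where
  N1 : Fin m → Fin n → Fin m → E m n → ℝ
  N2 : Fin m → Fin n → Fin n → E m n → ℝ

variable {m n : ℕ}

/-- Adapted frame vector field `δ/δt^b`. -/
def NLC.dT (N : NLC m n) (b : Fin m) : E m n → E m n :=
  fun u => (Pi.single b 1, 0, fun a i => -(N.N1 a i b u))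

/-- Adapted frame vector field `δ/δx^j`. -/
def NLC.dX (N : NLC m n) (j : Fin n) : E m n → E m n :=
  fun u => (0, Pi.single j 1, fun a i => -(N.N2 a i j u))

/-- The constant vertical frame vector field `∂/∂p_k^c`. -/
def dPfield (m n : ℕ) (c : Fin m) (k : Fin n) : E m n → E m n := fun _ => dPnat m n c k

/-- Lie bracket of vector fields on the model. -/
def lie (X Y : E m n → E m n) : E m n → E m n :=
  fun u => fderiv ℝ Y u (X u) - fderiv ℝ X u (Y u)

/-- The `δ/δt^c`-derivative of a function. -/
def NLC.delT (N : NLC m n) (c : Fin m) (f : E m n → ℝ) (u : E m n) : ℝ :=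
  fderiv ℝ f u (N.dT c u)

/-- The `δ/δx^k`-derivative of a function. -/
def NLC.delX (N : NLC m n) (k : Fin n) (f : E m n → ℝ) (u : E m n) : ℝ :=
  fderiv ℝ f u (N.dX k u)

/-- The `∂/∂p_k^c`-derivative of a function. -/
def delP (c : Fin m) (k : Fin n) (f : E m n → ℝ) (u : E m n) : ℝ :=
  fderiv ℝ f u (dPnat m n c k)

/-- `R^{(a)}_{(i)bc}`. -/
def NLC.R1 (N : NLC m n) (a : Fin m) (i : Fin n) (b c : Fin m) (u : E m n) : ℝ :=
  N.delT c (N.N1 a i b) u - N.delT b (N.N1 a i c) u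

/-- `R^{(a)}_{(i)bk}`. -/
def NLC.Rmix (N : NLC m n) (a : Fin m) (i : Fin n) (b : Fin m) (k : Fin n) (u : E m n) : ℝ :=
  N.delX k (N.N1 a i b) u - N.delT b (N.N2 a i k) u

/-- `R^{(a)}_{(i)jk}`. -/
def NLC.R2 (N : NLC m n) (a : Fin m) (i j k : Fin n) (u : E m n) : ℝ :=
  N.delX k (N.N2 a i j) u - N.delX j (N.N2 a i k) u

/-- `B^{(a)(k)}_{(i)b(c)} = ∂N1^{(a)}_{(i)b}/∂p_k^c`. -/
def NLC.B1 (N : NLC m n) (a : Fin m) (i : Fin n) (b c : Fin m) (k : Fin n) (u : E m n) : ℝ :=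
  delP c k (N.N1 a i b) u

/-- `B^{(a)(k)}_{(i)j(c)} = ∂N2^{(a)}_{(i)j}/∂p_k^c`. -/
def NLC.B2 (N : NLC m n) (a : Fin m) (i j : Fin n) (c : Fin m) (k : Fin n) (u : E m n) : ℝ :=
  delP c k (N.N2 a i j) u

/-- Smoothness of the coefficients of a nonlinear connection on a set. -/
def NLC.SmoothOn (N : NLC m n) (O : Set (E m n)) : Prop :=
  (∀ a i b, ContDiffOn ℝ (⊤ : ℕ∞) (N.N1 a i b) O) ∧ (∀ a i j, ContDiffOn ℝ (⊤ : ℕ∞) (N.N2 a i j) O)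

/-- The open set `U × V × P` of the model. -/
def modelSet (U : Set (Fin m → ℝ)) (V : Set (Fin n → ℝ)) : Set (E m n) :=
  U ×ˢ (V ×ˢ (Set.univ : Set (Fin m → Fin n → ℝ)))

/-- Jacobian matrix entry `(Jac f t) b a = ∂f^b/∂t^a`. -/
def Jac {k : ℕ} (f : (Fin k → ℝ) → (Fin k → ℝ)) (t : Fin k → ℝ) (b a : Fin k) : ℝ :=
  fderiv ℝ f t (Pi.single a 1) b

/-- A jet coordinate change: smooth diffeomorphisms `φ : U → U'` and `ψ : V → V'`. -/
structure JetChange (m n : ℕ) where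
  U : Set (Fin m → ℝ)
  U' : Set (Fin m → ℝ)
  V : Set (Fin n → ℝ)
  V' : Set (Fin n → ℝ)
  hUopen : IsOpen U
  hU'open : IsOpen U'
  hVopen : IsOpen V
  hV'open : IsOpen V'
  φ : (Fin m → ℝ) → (Fin m → ℝ)
  φi : (Fin m → ℝ) → (Fin m → ℝ)
  ψ : (Fin n → ℝ) → (Fin n → ℝ)
  ψi : (Fin n → ℝ) → (Fin n → ℝ)
  hφ : ContDiffOn ℝ (⊤ : ℕ∞) φ U
  hφi : ContDiffOn ℝ (⊤ : ℕ∞) φi U'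
  hψ : ContDiffOn ℝ (⊤ : ℕ∞) ψ V
  hψi : ContDiffOn ℝ (⊤ : ℕ∞) ψi V'
  hφmaps : Set.MapsTo φ U U'
  hφimaps : Set.MapsTo φi U' U
  hψmaps : Set.MapsTo ψ V V'
  hψimaps : Set.MapsTo ψi V' V
  hφleft : ∀ t ∈ U, φi (φ t) = t
  hφright : ∀ s ∈ U', φ (φi s) = s
  hψleft : ∀ x ∈ V, ψi (ψ x) = x
  hψright : ∀ y ∈ V', ψ (ψi y) = y

/-- The source domain `U × V × P` of a jet change. -/
def JetChange.src (C : JetChange m n) : Set (E m n) := modelSet C.U C.V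

/-- The induced map `Φ` on the dual 1-jet space:
`p̃_j^b = (∂t̃^b/∂t^c)(∂x^k/∂x̃^j) p_k^c`. -/
def JetChange.Φ (C : JetChange m n) : E m n → E m n :=
  fun u => (C.φ u.1, C.ψ u.2.1,
    fun b j => ∑ c, ∑ k, Jac C.φ u.1 b c * Jac C.ψi (C.ψ u.2.1) k j * u.2.2 c k)

/-- The transformation rule (7) for nonlinear connections under a jet change. -/
def JetChange.Rule7 (C : JetChange m n) (N N' : NLC m n) : Prop :=
  ∀ u ∈ C.src,
    (∀ b j a,
      ∑ c, N'.N1 b j c (C.Φ u) * Jac C.φ u.1 c a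
        = (∑ c, ∑ k, N.N1 c k a u * Jac C.φ u.1 b c * Jac C.ψi (C.ψ u.2.1) k j)
          - fderiv ℝ (fun v => (C.Φ v).2.2 b j) u (dTnat m n a))
    ∧ (∀ b j i,
      ∑ k, N'.N2 b j k (C.Φ u) * Jac C.ψ u.2.1 k i
        = (∑ c, ∑ k, N.N2 c k i u * Jac C.φ u.1 b c * Jac C.ψi (C.ψ u.2.1) k j)
          - fderiv ℝ (fun v => (C.Φ v).2.2 b j) u (dXnat m n i))

/-- The adapted 1-form `δp_i^a` evaluated at `u` on a tangent vector `ξ`. -/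
def delPform (N : NLC m n) (a : Fin m) (i : Fin n) (u : E m n) (ξ : E m n) : ℝ :=
  ξ.2.2 a i + (∑ b, N.N1 a i b u * ξ.1 b) + (∑ j, N.N2 a i j u * ξ.2.1 j)

/-- The `T`-horizontal subspace at `u`. -/
def NLC.HT (N : NLC m n) (u : E m n) : Submodule ℝ (E m n) :=
  Submodule.span ℝ (Set.range fun a => N.dT a u)

/-- The `M`-horizontal subspace at `u`. -/
def NLC.HM (N : NLC m n) (u : E m n) : Submodule ℝ (E m n) :=
  Submodule.span ℝ (Set.range fun i => N.dX i u)

/-- The vertical subspace. -/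
def Vert (m n : ℕ) : Submodule ℝ (E m n) :=
  Submodule.span ℝ (Set.range fun ai : Fin m × Fin n => dPnat m n ai.1 ai.2)

/-- The horizontal subspace at `u`. -/
def NLC.Hor (N : NLC m n) (u : E m n) : Submodule ℝ (E m n) :=
  Submodule.span ℝ ((Set.range fun a => N.dT a u) ∪ (Set.range fun i => N.dX i u))

/-- Pointwise `T`-horizontal projection. -/
def NLC.hT (N : NLC m n) (u : E m n) (ξ : E m n) : E m n :=
  (ξ.1, 0, fun a i => -∑ b, N.N1 a i b u * ξ.1 b)

/-- Pointwise `M`-horizontal projection. -/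
def NLC.hM (N : NLC m n) (u : E m n) (ξ : E m n) : E m n :=
  (0, ξ.2.1, fun a i => -∑ j, N.N2 a i j u * ξ.2.1 j)

/-- Pointwise vertical projection. -/
def NLC.w (N : NLC m n) (u : E m n) (ξ : E m n) : E m n :=
  (0, 0, fun a i => ξ.2.2 a i + (∑ b, N.N1 a i b u * ξ.1 b) + (∑ j, N.N2 a i j u * ξ.2.1 j))

/-- The almost product structure `ℙ = h_T + h_M − w` of a nonlinear connection, pointwise. -/
def NLC.apP (N : NLC m n) (u : E m n) (ξ : E m n) : E m n :=
  (ξ.1, ξ.2.1, fun a i =>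
    -(ξ.2.2 a i) - 2 * (∑ b, N.N1 a i b u * ξ.1 b) - 2 * (∑ j, N.N2 a i j u * ξ.2.1 j))

/-- `h_T` applied to a vector field. -/
def NLC.hTF (N : NLC m n) (X : E m n → E m n) : E m n → E m n := fun u => N.hT u (X u)

/-- `h_M` applied to a vector field. -/
def NLC.hMF (N : NLC m n) (X : E m n → E m n) : E m n → E m n := fun u => N.hM u (X u)

/-- `w` applied to a vector field. -/
def NLC.wF (N : NLC m n) (X : E m n → E m n) : E m n → E m n := fun u => N.w u (X u)

/-- `ℙ` applied to a vector field. -/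
def NLC.PF (N : NLC m n) (X : E m n → E m n) : E m n → E m n := fun u => N.apP u (X u)

/-- The Nijenhuis tensor of the almost product structure `ℙ`. -/
def Nij (N : NLC m n) (X Y : E m n → E m n) : E m n → E m n :=
  fun u => N.PF (N.PF (lie X Y)) u + lie (N.PF X) (N.PF Y) u
    - N.PF (lie (N.PF X) Y) u - N.PF (lie X (N.PF Y)) u

/-- An `N`-linear connection: the nine adapted coefficient families.
Index conventions: `A1 a b c = A^a_{bc}`, `A2 i j c = A^i_{jc}`,
`A3 a i b j c = A^{(a)(j)}_{(i)(b)c}`, `H1 a b k = H^a_{bk}`, `H2 i j k = H^i_{jk}`,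
`H3 a i b j k = H^{(a)(j)}_{(i)(b)k}`, `C1 a b c k = C^{a(k)}_{b(c)}`,
`C2 i j c k = C^{i(k)}_{j(c)}`, `C3 a i b j c k = C^{(a)(j)(k)}_{(i)(b)(c)}`. -/
structure NLinConn (m n : ℕ) where
  A1 : Fin m → Fin m → Fin m → E m n → ℝ
  A2 : Fin n → Fin n → Fin m → E m n → ℝ
  A3 : Fin m → Fin n → Fin m → Fin n → Fin m → E m n → ℝ
  H1 : Fin m → Fin m → Fin n → E m n → ℝ
  H2 : Fin n → Fin n → Fin n → E m n → ℝ
  H3 : Fin m → Fin n → Fin m → Fin n → Fin n → E m n → ℝ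
  C1 : Fin m → Fin m → Fin m → Fin n → E m n → ℝ
  C2 : Fin n → Fin n → Fin m → Fin n → E m n → ℝ
  C3 : Fin m → Fin n → Fin m → Fin n → Fin m → Fin n → E m n → ℝ

/-- Smoothness of the coefficients of an `N`-linear connection on a set. -/
def NLinConn.SmoothOn (D : NLinConn m n) (O : Set (E m n)) : Prop :=
  (∀ a b c, ContDiffOn ℝ (⊤ : ℕ∞) (D.A1 a b c) O) ∧ (∀ i j c, ContDiffOn ℝ (⊤ : ℕ∞) (D.A2 i j c) O) ∧
  (∀ a i b j c, ContDiffOn ℝ (⊤ : ℕ∞) (D.A3 a i b j c) O) ∧ (∀ a b k, ContDiffOn ℝ (⊤ : ℕ∞) (D.H1 a b k) O) ∧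
  (∀ i j k, ContDiffOn ℝ (⊤ : ℕ∞) (D.H2 i j k) O) ∧ (∀ a i b j k, ContDiffOn ℝ (⊤ : ℕ∞) (D.H3 a i b j k) O) ∧
  (∀ a b c k, ContDiffOn ℝ (⊤ : ℕ∞) (D.C1 a b c k) O) ∧ (∀ i j c k, ContDiffOn ℝ (⊤ : ℕ∞) (D.C2 i j c k) O) ∧
  (∀ a i b j c k, ContDiffOn ℝ (⊤ : ℕ∞) (D.C3 a i b j c k) O)

/-- Adapted `t`-component of a vector field. -/
def compT (X : E m n → E m n) (a : Fin m) (u : E m n) : ℝ := (X u).1 a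

/-- Adapted `x`-component of a vector field. -/
def compX (X : E m n → E m n) (i : Fin n) (u : E m n) : ℝ := (X u).2.1 i

/-- Adapted vertical component of a vector field. -/
def compP (N : NLC m n) (X : E m n → E m n) (a : Fin m) (i : Fin n) (u : E m n) : ℝ :=
  (X u).2.2 a i + (∑ b, N.N1 a i b u * (X u).1 b) + (∑ j, N.N2 a i j u * (X u).2.1 j)

/-- Reconstruct a tangent vector from its adapted components. -/
def fromA (N : NLC m n) (ft : Fin m → ℝ) (fx : Fin n → ℝ) (fp : Fin m → Fin n → ℝ)
    (u : E m n) : E m n :=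
  (ft, fx, fun a i => fp a i - (∑ b, N.N1 a i b u * ft b) - (∑ j, N.N2 a i j u * fx j))

/-- Covariant derivative `D_{δ/δt^c} Y`. -/
def covT (N : NLC m n) (D : NLinConn m n) (c : Fin m) (Y : E m n → E m n) : E m n → E m n :=
  fun u => fromA N
    (fun a => N.delT c (compT Y a) u + ∑ b, compT Y b u * D.A1 a b c u)
    (fun i => N.delT c (compX Y i) u + ∑ j, compX Y j u * D.A2 i j c u)
    (fun a i => N.delT c (compP N Y a i) u - ∑ b, ∑ j, compP N Y b j u * D.A3 a i b j c u)
    u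

/-- Covariant derivative `D_{δ/δx^k} Y`. -/
def covX (N : NLC m n) (D : NLinConn m n) (k : Fin n) (Y : E m n → E m n) : E m n → E m n :=
  fun u => fromA N
    (fun a => N.delX k (compT Y a) u + ∑ b, compT Y b u * D.H1 a b k u)
    (fun i => N.delX k (compX Y i) u + ∑ j, compX Y j u * D.H2 i j k u)
    (fun a i => N.delX k (compP N Y a i) u - ∑ b, ∑ j, compP N Y b j u * D.H3 a i b j k u)
    u

/-- Covariant derivative `D_{∂/∂p_k^c} Y`. -/
def covP (N : NLC m n) (D : NLinConn m n) (c : Fin m) (k : Fin n) (Y : E m n → E m n) :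
    E m n → E m n :=
  fun u => fromA N
    (fun a => delP c k (compT Y a) u + ∑ b, compT Y b u * D.C1 a b c k u)
    (fun i => delP c k (compX Y i) u + ∑ j, compX Y j u * D.C2 i j c k u)
    (fun a i => delP c k (compP N Y a i) u - ∑ b, ∑ j, compP N Y b j u * D.C3 a i b j c k u)
    u

/-- Covariant derivative `D_X Y` of an `N`-linear connection. -/
def covD (N : NLC m n) (D : NLinConn m n) (X Y : E m n → E m n) : E m n → E m n :=
  fun u => (∑ c, compT X c u • covT N D c Y u) + (∑ k, compX X k u • covX N D k Y u)
    + ∑ c, ∑ k, compP N X c k u • covP N D c k Y u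

/-- Torsion of an `N`-linear connection. -/
def tors (N : NLC m n) (D : NLinConn m n) (X Y : E m n → E m n) : E m n → E m n :=
  fun u => covD N D X Y u - covD N D Y X u - lie X Y u

/-- Curvature of an `N`-linear connection. -/
def curvR (N : NLC m n) (D : NLinConn m n) (X Y Z : E m n → E m n) : E m n → E m n :=
  fun u => covD N D X (covD N D Y Z) u - covD N D Y (covD N D X Z) u
    - covD N D (lie X Y) Z u

/-- The Berwald nonlinear connection associated to linear connections `χ`, `Γ`. -/
def berN (χ : Fin m → Fin m → Fin m → (Fin m → ℝ) → ℝ)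
    (Γ : Fin n → Fin n → Fin n → (Fin n → ℝ) → ℝ) : NLC m n where
  N1 := fun a i b u => ∑ c, χ a c b u.1 * u.2.2 c i
  N2 := fun a i j u => -∑ k, Γ k i j u.2.1 * u.2.2 a k

/-- The Berwald `N`-linear connection associated to linear connections `χ`, `Γ`. -/
def berD (χ : Fin m → Fin m → Fin m → (Fin m → ℝ) → ℝ)
    (Γ : Fin n → Fin n → Fin n → (Fin n → ℝ) → ℝ) : NLinConn m n where
  A1 := fun a b c u => χ a b c u.1
  A2 := fun _ _ _ _ => 0
  A3 := fun a i b j c u => -((if j = i then (1 : ℝ) else 0) * χ a b c u.1)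
  H1 := fun _ _ _ _ => 0
  H2 := fun i j k u => Γ i j k u.2.1
  H3 := fun a i b j k u => (if a = b then (1 : ℝ) else 0) * Γ j i k u.2.1
  C1 := fun _ _ _ _ _ => 0
  C2 := fun _ _ _ _ _ => 0
  C3 := fun _ _ _ _ _ _ _ => 0

/-- Curvature tensor `κ^f_{gab}` of a linear connection `χ` on `U`. -/
def kapC (χ : Fin m → Fin m → Fin m → (Fin m → ℝ) → ℝ) (f g a b : Fin m)
    (t : Fin m → ℝ) : ℝ :=
  fderiv ℝ (χ f g a) t (Pi.single b 1) - fderiv ℝ (χ f g b) t (Pi.single a 1)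
    + (∑ e, χ e g a t * χ f e b t) - ∑ e, χ e g b t * χ f e a t

/-- Curvature tensor `𝐫^s_{rij}` of a linear connection `Γ` on `V`. -/
def rC (Γ : Fin n → Fin n → Fin n → (Fin n → ℝ) → ℝ) (s r i j : Fin n)
    (x : Fin n → ℝ) : ℝ :=
  fderiv ℝ (Γ s r i) x (Pi.single j 1) - fderiv ℝ (Γ s r j) x (Pi.single i 1)
    + (∑ l, Γ l r i x * Γ s l j x) - ∑ l, Γ l r j x * Γ s l i x

end

section Statements

open scoped BigOperators


section Aux

open scoped BigOperators

variable {m n : ℕ}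

lemma decompE0 (ξ : E m n) :
    ξ = (∑ a, ξ.1 a • dTnat m n a) + ((∑ i, ξ.2.1 i • dXnat m n i)
      + ∑ c, ∑ k, ξ.2.2 c k • dPnat m n c k) := by
  refine Prod.ext ?_ (Prod.ext ?_ ?_) <;>
  · try funext b
    try funext k
    simp [dTnat, dXnat, dPnat, Pi.single_apply, Finset.sum_apply,
      Prod.fst_sum, Prod.snd_sum]

lemma clm_decomp0 (L : E m n →L[ℝ] ℝ) (ξ : E m n) :
    L ξ = (∑ a, ξ.1 a * L (dTnat m n a)) + ((∑ i, ξ.2.1 i * L (dXnat m n i))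
      + ∑ c, ∑ k, ξ.2.2 c k * L (dPnat m n c k)) := by
  conv_lhs => rw [decompE0 ξ]
  simp [map_sum, smul_eq_mul]

lemma clm_apply_pi0 {k : ℕ} (L : (Fin k → ℝ) →L[ℝ] (Fin k → ℝ)) (v : Fin k → ℝ) (b : Fin k) :
    L v b = ∑ a, L (Pi.single a 1) b * v a := by
  have hv : v = ∑ a, v a • (Pi.single a (1:ℝ) : Fin k → ℝ) := by
    funext j
    simp [Pi.single_apply, Finset.sum_apply]
  conv_lhs => rw [hv]
  simp [map_sum, Finset.sum_apply, mul_comm]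

lemma swap30 {A B C : Type*} [Fintype A] [Fintype B] [Fintype C] (f : A → B → C → ℝ) :
    ∑ a, ∑ b, ∑ c, f a b c = ∑ b, ∑ c, ∑ a, f a b c := by
  rw [Finset.sum_comm]
  exact Finset.sum_congr rfl fun _ _ => Finset.sum_comm

lemma sum_mul_swap0 {A B C : Type*} [Fintype A] [Fintype B] [Fintype C]
    (x : A → ℝ) (g : A → B → C → ℝ) :
    (∑ a, x a * ∑ b, ∑ c, g a b c) = ∑ b, ∑ c, ∑ a, x a * g a b c := by
  simp only [Finset.mul_sum]
  exact swap30 _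

lemma diffAt_of_cdOn {F G : Type*} [NormedAddCommGroup F] [NormedSpace ℝ F]
    [NormedAddCommGroup G] [NormedSpace ℝ G] {N : WithTop ℕ∞} (hN : 1 ≤ N)
    {f : F → G} {S : Set F}
    (hf : ContDiffOn ℝ N f S) (hS : IsOpen S) {x : F} (hx : x ∈ S) :
    DifferentiableAt ℝ f x :=
  (hf.contDiffAt (hS.mem_nhds hx)).differentiableAt (zero_lt_one.trans_le hN).ne'

lemma jacSmooth {k : ℕ} {f : (Fin k → ℝ) → (Fin k → ℝ)} {S : Set (Fin k → ℝ)}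
    (hf : ContDiffOn ℝ (⊤ : ℕ∞) f S) (hS : IsOpen S) (b a : Fin k) :
    ContDiffOn ℝ (⊤:ℕ∞) (fun t => Jac f t b a) S := by
  have h1 : ContDiffOn ℝ (⊤:ℕ∞) (fderiv ℝ f) S := hf.fderiv_of_isOpen hS (by simp)
  have h2 : ContDiffOn ℝ (⊤:ℕ∞) (fun t => fderiv ℝ f t (Pi.single a 1)) S :=
    h1.clm_apply contDiffOn_const
  exact (ContinuousLinearMap.proj b :
    ((Fin k → ℝ)) →L[ℝ] ℝ).contDiff.comp_contDiffOn h2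

lemma invJac0 {k : ℕ} {f g : (Fin k → ℝ) → (Fin k → ℝ)} {S S' : Set (Fin k → ℝ)}
    (hf : ContDiffOn ℝ (⊤ : ℕ∞) f S) (hg : ContDiffOn ℝ (⊤ : ℕ∞) g S') (hS : IsOpen S) (hS' : IsOpen S')
    (hmaps : Set.MapsTo f S S') (hleft : ∀ t ∈ S, g (f t) = t)
    {t : Fin k → ℝ} (ht : t ∈ S) (a c : Fin k) :
    ∑ b, Jac g (f t) a b * Jac f t b c = if a = c then 1 else 0 := by
  have hfd : DifferentiableAt ℝ f t := diffAt_of_cdOn (by simp) hf hS ht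
  have hgd : DifferentiableAt ℝ g (f t) := diffAt_of_cdOn (by simp) hg hS' (hmaps ht)
  have hcomp : fderiv ℝ (g ∘ f) t = (fderiv ℝ g (f t)).comp (fderiv ℝ f t) :=
    fderiv_comp t hgd hfd
  have hev : (g ∘ f) =ᶠ[nhds t] id := by
    filter_upwards [hS.mem_nhds ht] with s hs using hleft s hs
  have hid : fderiv ℝ (g ∘ f) t = ContinuousLinearMap.id ℝ (Fin k → ℝ) := by
    rw [Filter.EventuallyEq.fderiv_eq hev, fderiv_id]
  have key : (fderiv ℝ g (f t)) ((fderiv ℝ f t) (Pi.single c 1)) a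
      = (Pi.single c (1:ℝ) : Fin k → ℝ) a := by
    have h := congrArg (fun L : (Fin k → ℝ) →L[ℝ] (Fin k → ℝ) => L (Pi.single c (1:ℝ)) a)
      (hcomp.symm.trans hid)
    simpa using h
  rw [clm_apply_pi0 (fderiv ℝ g (f t)) _ a] at key
  simpa [Jac, Pi.single_apply] using key

end Aux

theorem stmt2 (m n : ℕ) (C : JetChange m n) (N N' : NLC m n)
    (hN : N.SmoothOn (modelSet C.U C.V)) (hN' : N'.SmoothOn (modelSet C.U' C.V'))
    (h7 : C.Rule7 N N') :
    (∀ u ∈ C.src, ∀ ξ : E m n, ∀ (a : Fin m) (i : Fin n),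
      delPform N a i u ξ
        = ∑ b, ∑ j, Jac C.φi (C.φ u.1) a b * Jac C.ψ u.2.1 j i
            * delPform N' b j (C.Φ u) (fderiv ℝ C.Φ u ξ))
    ∧ (∀ u : E m n,
        (∀ a b : Fin m, (N.dT b u).1 a = if a = b then (1 : ℝ) else 0)
        ∧ (∀ (a : Fin m) (j : Fin n), (N.dX j u).1 a = 0)
        ∧ (∀ (a b : Fin m) (j : Fin n), (dPnat m n b j).1 a = 0)
        ∧ (∀ (i : Fin n) (b : Fin m), (N.dT b u).2.1 i = 0)
        ∧ (∀ i j : Fin n, (N.dX j u).2.1 i = if i = j then (1 : ℝ) else 0)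
        ∧ (∀ (i : Fin n) (b : Fin m) (j : Fin n), (dPnat m n b j).2.1 i = 0)
        ∧ (∀ (a : Fin m) (i : Fin n) (b : Fin m), delPform N a i u (N.dT b u) = 0)
        ∧ (∀ (a : Fin m) (i j : Fin n), delPform N a i u (N.dX j u) = 0)
        ∧ (∀ (a : Fin m) (i : Fin n) (b : Fin m) (j : Fin n),
            delPform N a i u (dPnat m n b j)
              = (if a = b then (1 : ℝ) else 0) * (if i = j then (1 : ℝ) else 0))) := by
  constructor
  · intro u hu ξ a i
    have hu1 : u.1 ∈ C.U := hu.1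
    have hu2 : u.2.1 ∈ C.V := hu.2.1
    have hsrc : IsOpen C.src := IsOpen.prod C.hUopen (C.hVopen.prod isOpen_univ)
    have hφd : DifferentiableAt ℝ C.φ u.1 := diffAt_of_cdOn (by simp) C.hφ C.hUopen hu1
    have hψd : DifferentiableAt ℝ C.ψ u.2.1 := diffAt_of_cdOn (by simp) C.hψ C.hVopen hu2
    have hf3 : ∀ (b : Fin m) (j : Fin n),
        ContDiffOn ℝ (⊤:ℕ∞) (fun v : E m n => (C.Φ v).2.2 b j) C.src := by
      intro b j
      have hJφ : ∀ c : Fin m, ContDiffOn ℝ (⊤:ℕ∞) (fun v : E m n => Jac C.φ v.1 b c) C.src :=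
        fun c => (jacSmooth C.hφ C.hUopen b c).comp contDiff_fst.contDiffOn fun v hv => hv.1
      have hψv : ContDiffOn ℝ (⊤:ℕ∞) (fun v : E m n => C.ψ v.2.1) C.src :=
        (C.hψ.of_le (by simp)).comp ((contDiff_fst.comp contDiff_snd).contDiffOn)
          fun v hv => hv.2.1
      have hJψi : ∀ k : Fin n,
          ContDiffOn ℝ (⊤:ℕ∞) (fun v : E m n => Jac C.ψi (C.ψ v.2.1) k j) C.src :=
        fun k => (jacSmooth C.hψi C.hV'open k j).comp hψv fun v hv => C.hψmaps hv.2.1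
      have hp : ∀ (c : Fin m) (k : Fin n), ContDiff ℝ (⊤:ℕ∞) (fun v : E m n => v.2.2 c k) := by
        intro c k
        have h0 : ContDiff ℝ (⊤:ℕ∞) (fun v : E m n => v.2.2) := contDiff_snd.comp contDiff_snd
        exact contDiff_pi.mp (contDiff_pi.mp h0 c) k
      show ContDiffOn ℝ (⊤:ℕ∞)
        (fun v : E m n => ∑ c, ∑ k, Jac C.φ v.1 b c * Jac C.ψi (C.ψ v.2.1) k j * v.2.2 c k) C.src
      apply ContDiffOn.sum
      intro c _
      apply ContDiffOn.sum
      intro k _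
      exact ((hJφ c).mul (hJψi k)).mul (hp c k).contDiffOn
    have hf3d : ∀ (b : Fin m) (j : Fin n),
        DifferentiableAt ℝ (fun v : E m n => (C.Φ v).2.2 b j) u :=
      fun b j => diffAt_of_cdOn (by exact_mod_cast le_top) (hf3 b j) hsrc hu
    -- fderiv of Φ
    have hΦ : HasFDerivAt C.Φ
        (((fderiv ℝ C.φ u.1).comp
            (ContinuousLinearMap.fst ℝ (Fin m → ℝ) ((Fin n → ℝ) × (Fin m → Fin n → ℝ)))).prod
          (((fderiv ℝ C.ψ u.2.1).comp
            ((ContinuousLinearMap.fst ℝ (Fin n → ℝ) (Fin m → Fin n → ℝ)).comp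
              (ContinuousLinearMap.snd ℝ (Fin m → ℝ) ((Fin n → ℝ) × (Fin m → Fin n → ℝ))))).prod
           (ContinuousLinearMap.pi (fun b : Fin m => ContinuousLinearMap.pi (fun j : Fin n =>
             fderiv ℝ (fun v : E m n => (C.Φ v).2.2 b j) u))))) u := by
      have h1 : HasFDerivAt (fun v : E m n => C.φ v.1)
          ((fderiv ℝ C.φ u.1).comp
            (ContinuousLinearMap.fst ℝ (Fin m → ℝ) ((Fin n → ℝ) × (Fin m → Fin n → ℝ)))) u :=
        hφd.hasFDerivAt.comp u hasFDerivAt_fst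
      have h2 : HasFDerivAt (fun v : E m n => C.ψ v.2.1)
          ((fderiv ℝ C.ψ u.2.1).comp
            ((ContinuousLinearMap.fst ℝ (Fin n → ℝ) (Fin m → Fin n → ℝ)).comp
              (ContinuousLinearMap.snd ℝ (Fin m → ℝ) ((Fin n → ℝ) × (Fin m → Fin n → ℝ))))) u :=
        hψd.hasFDerivAt.comp u (hasFDerivAt_fst.comp u hasFDerivAt_snd)
      have h3 : HasFDerivAt (fun v : E m n => (C.Φ v).2.2)
          (ContinuousLinearMap.pi (fun b : Fin m => ContinuousLinearMap.pi (fun j : Fin n =>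
             fderiv ℝ (fun v : E m n => (C.Φ v).2.2 b j) u))) u :=
        hasFDerivAt_pi.mpr fun b => hasFDerivAt_pi.mpr fun j => (hf3d b j).hasFDerivAt
      exact HasFDerivAt.prodMk h1 (HasFDerivAt.prodMk h2 h3)
    have hfd := hΦ.fderiv
    have hc1 : ∀ c : Fin m, (fderiv ℝ C.Φ u ξ).1 c = ∑ a', Jac C.φ u.1 c a' * ξ.1 a' := by
      intro c
      rw [hfd]
      exact clm_apply_pi0 (fderiv ℝ C.φ u.1) ξ.1 c
    have hc2 : ∀ k : Fin n, (fderiv ℝ C.Φ u ξ).2.1 k = ∑ i', Jac C.ψ u.2.1 k i' * ξ.2.1 i' := by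
      intro k
      rw [hfd]
      exact clm_apply_pi0 (fderiv ℝ C.ψ u.2.1) ξ.2.1 k
    have hc3 : ∀ (b : Fin m) (j : Fin n), (fderiv ℝ C.Φ u ξ).2.2 b j
        = fderiv ℝ (fun v : E m n => (C.Φ v).2.2 b j) u ξ := by
      intro b j
      rw [hfd]
      rfl
    -- derivative of p̃ in vertical directions
    have hdP : ∀ (b c : Fin m) (j k : Fin n),
        fderiv ℝ (fun v : E m n => (C.Φ v).2.2 b j) u (dPnat m n c k)
          = Jac C.φ u.1 b c * Jac C.ψi (C.ψ u.2.1) k j := by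
      intro b c j k
      rw [← (hf3d b j).lineDeriv_eq_fderiv]
      have h1 : ∀ s : ℝ, (u + s • dPnat m n c k).1 = u.1 := by
        intro s; simp [dPnat]
      have h2 : ∀ s : ℝ, (u + s • dPnat m n c k).2.1 = u.2.1 := by
        intro s; simp [dPnat]
      have hfun : (fun s : ℝ => (C.Φ (u + s • dPnat m n c k)).2.2 b j)
          = fun s : ℝ => (C.Φ u).2.2 b j
              + s * (Jac C.φ u.1 b c * Jac C.ψi (C.ψ u.2.1) k j) := by
        funext s
        show (∑ c', ∑ k', Jac C.φ (u + s • dPnat m n c k).1 b c'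
              * Jac C.ψi (C.ψ (u + s • dPnat m n c k).2.1) k' j
              * (u + s • dPnat m n c k).2.2 c' k') = _
        rw [h1 s, h2 s]
        have h3 : ∀ (c' : Fin m) (k' : Fin n), (u + s • dPnat m n c k).2.2 c' k'
            = u.2.2 c' k' + s * ((if c' = c then (1:ℝ) else 0) * (if k' = k then 1 else 0)) := by
          intro c' k'
          by_cases hc : c' = c <;> by_cases hk : k' = k <;>
            simp [dPnat, Pi.single_apply, hc, hk]
        simp only [h3, mul_add, Finset.sum_add_distrib]
        have h4 : (∑ c', ∑ k', Jac C.φ u.1 b c' * Jac C.ψi (C.ψ u.2.1) k' j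
            * (s * ((if c' = c then (1:ℝ) else 0) * (if k' = k then 1 else 0))))
            = s * (Jac C.φ u.1 b c * Jac C.ψi (C.ψ u.2.1) k j) := by
          rw [Finset.sum_eq_single c]
          · rw [Finset.sum_eq_single k]
            · simp; ring
            · intro k' _ hk'; simp [hk']
            · simp
          · intro c' _ hc'
            simp [hc']
          · simp
        rw [h4]
        rfl
      rw [show lineDeriv ℝ (fun v : E m n => (C.Φ v).2.2 b j) u (dPnat m n c k)
          = deriv (fun s : ℝ => (C.Φ (u + s • dPnat m n c k)).2.2 b j) 0 from rfl, hfun]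
      simp
    -- inverse Jacobian identities
    have invφ : ∀ a' c : Fin m,
        ∑ b, Jac C.φi (C.φ u.1) a' b * Jac C.φ u.1 b c = if a' = c then 1 else 0 :=
      fun a' c => invJac0 C.hφ C.hφi C.hUopen C.hU'open C.hφmaps C.hφleft hu1 a' c
    have invψ : ∀ k i' : Fin n,
        ∑ j, Jac C.ψi (C.ψ u.2.1) k j * Jac C.ψ u.2.1 j i' = if k = i' then 1 else 0 :=
      fun k i' => invJac0 C.hψ C.hψi C.hVopen C.hV'open C.hψmaps C.hψleft hu2 k i'
    -- the key contraction
    have canon : ∀ (b : Fin m) (j : Fin n),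
        (∑ c, ∑ k, Jac C.φ u.1 b c * Jac C.ψi (C.ψ u.2.1) k j * delPform N c k u ξ)
        = (∑ a', ξ.1 a' * ∑ c, ∑ k, N.N1 c k a' u * Jac C.φ u.1 b c
              * Jac C.ψi (C.ψ u.2.1) k j)
          + ((∑ i', ξ.2.1 i' * ∑ c, ∑ k, N.N2 c k i' u * Jac C.φ u.1 b c
              * Jac C.ψi (C.ψ u.2.1) k j)
          + ∑ c, ∑ k, ξ.2.2 c k * (Jac C.φ u.1 b c * Jac C.ψi (C.ψ u.2.1) k j)) := by
      intro b j
      rw [sum_mul_swap0 (fun a' => ξ.1 a')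
          (fun a' c k => N.N1 c k a' u * Jac C.φ u.1 b c * Jac C.ψi (C.ψ u.2.1) k j),
        sum_mul_swap0 (fun i' => ξ.2.1 i')
          (fun i' c k => N.N2 c k i' u * Jac C.φ u.1 b c * Jac C.ψi (C.ψ u.2.1) k j)]
      simp only [← Finset.sum_add_distrib]
      refine Finset.sum_congr rfl fun c _ => Finset.sum_congr rfl fun k _ => ?_
      simp only [delPform, mul_add, Finset.mul_sum]
      have hA : (∑ a', Jac C.φ u.1 b c * Jac C.ψi (C.ψ u.2.1) k j * (N.N1 c k a' u * ξ.1 a'))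
          = ∑ a', ξ.1 a' * (N.N1 c k a' u * Jac C.φ u.1 b c * Jac C.ψi (C.ψ u.2.1) k j) :=
        Finset.sum_congr rfl fun a' _ => by ring
      have hB : (∑ i', Jac C.φ u.1 b c * Jac C.ψi (C.ψ u.2.1) k j * (N.N2 c k i' u * ξ.2.1 i'))
          = ∑ i', ξ.2.1 i' * (N.N2 c k i' u * Jac C.φ u.1 b c * Jac C.ψi (C.ψ u.2.1) k j) :=
        Finset.sum_congr rfl fun i' _ => by ring
      rw [hA, hB]
      ring
    have key : ∀ (b : Fin m) (j : Fin n),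
        delPform N' b j (C.Φ u) (fderiv ℝ C.Φ u ξ)
        = ∑ c, ∑ k, Jac C.φ u.1 b c * Jac C.ψi (C.ψ u.2.1) k j * delPform N c k u ξ := by
      intro b j
      have e3 : (fderiv ℝ C.Φ u ξ).2.2 b j
          = (∑ a', ξ.1 a' * fderiv ℝ (fun v : E m n => (C.Φ v).2.2 b j) u (dTnat m n a'))
            + ((∑ i', ξ.2.1 i' * fderiv ℝ (fun v : E m n => (C.Φ v).2.2 b j) u (dXnat m n i'))
            + ∑ c, ∑ k, ξ.2.2 c k * (Jac C.φ u.1 b c * Jac C.ψi (C.ψ u.2.1) k j)) := by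
        rw [hc3 b j, clm_decomp0]
        congr 1
        congr 1
        exact Finset.sum_congr rfl fun c _ => Finset.sum_congr rfl fun k _ => by
          rw [hdP b c j k]
      have e1 : (∑ c, N'.N1 b j c (C.Φ u) * (fderiv ℝ C.Φ u ξ).1 c)
          = ∑ a', ξ.1 a' * ((∑ c, ∑ k, N.N1 c k a' u * Jac C.φ u.1 b c
              * Jac C.ψi (C.ψ u.2.1) k j)
            - fderiv ℝ (fun v : E m n => (C.Φ v).2.2 b j) u (dTnat m n a')) := by
        calc (∑ c, N'.N1 b j c (C.Φ u) * (fderiv ℝ C.Φ u ξ).1 c)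
            = ∑ c, ∑ a', N'.N1 b j c (C.Φ u) * (Jac C.φ u.1 c a' * ξ.1 a') := by
              refine Finset.sum_congr rfl fun c _ => ?_
              rw [hc1 c, Finset.mul_sum]
          _ = ∑ a', ∑ c, N'.N1 b j c (C.Φ u) * (Jac C.φ u.1 c a' * ξ.1 a') := Finset.sum_comm
          _ = ∑ a', ξ.1 a' * ∑ c, N'.N1 b j c (C.Φ u) * Jac C.φ u.1 c a' := by
              refine Finset.sum_congr rfl fun a' _ => ?_
              rw [Finset.mul_sum]
              exact Finset.sum_congr rfl fun c _ => by ring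
          _ = _ := by
              refine Finset.sum_congr rfl fun a' _ => ?_
              rw [(h7 u hu).1 b j a']
      have e2 : (∑ k, N'.N2 b j k (C.Φ u) * (fderiv ℝ C.Φ u ξ).2.1 k)
          = ∑ i', ξ.2.1 i' * ((∑ c, ∑ k, N.N2 c k i' u * Jac C.φ u.1 b c
              * Jac C.ψi (C.ψ u.2.1) k j)
            - fderiv ℝ (fun v : E m n => (C.Φ v).2.2 b j) u (dXnat m n i')) := by
        calc (∑ k, N'.N2 b j k (C.Φ u) * (fderiv ℝ C.Φ u ξ).2.1 k)
            = ∑ k, ∑ i', N'.N2 b j k (C.Φ u) * (Jac C.ψ u.2.1 k i' * ξ.2.1 i') := by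
              refine Finset.sum_congr rfl fun k _ => ?_
              rw [hc2 k, Finset.mul_sum]
          _ = ∑ i', ∑ k, N'.N2 b j k (C.Φ u) * (Jac C.ψ u.2.1 k i' * ξ.2.1 i') := Finset.sum_comm
          _ = ∑ i', ξ.2.1 i' * ∑ k, N'.N2 b j k (C.Φ u) * Jac C.ψ u.2.1 k i' := by
              refine Finset.sum_congr rfl fun i' _ => ?_
              rw [Finset.mul_sum]
              exact Finset.sum_congr rfl fun k _ => by ring
          _ = _ := by
              refine Finset.sum_congr rfl fun i' _ => ?_
              rw [(h7 u hu).2 b j i']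
      show (fderiv ℝ C.Φ u ξ).2.2 b j
          + (∑ c, N'.N1 b j c (C.Φ u) * (fderiv ℝ C.Φ u ξ).1 c)
          + (∑ k, N'.N2 b j k (C.Φ u) * (fderiv ℝ C.Φ u ξ).2.1 k) = _
      rw [e3, e1, e2, canon b j]
      simp only [mul_sub, Finset.sum_sub_distrib]
      ring
    -- final contraction with inverse Jacobians
    symm
    calc (∑ b, ∑ j, Jac C.φi (C.φ u.1) a b * Jac C.ψ u.2.1 j i
            * delPform N' b j (C.Φ u) (fderiv ℝ C.Φ u ξ))
        = ∑ b, ∑ j, (Jac C.φi (C.φ u.1) a b * Jac C.ψ u.2.1 j i)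
            * ∑ c, ∑ k, Jac C.φ u.1 b c * Jac C.ψi (C.ψ u.2.1) k j
              * delPform N c k u ξ := by
          exact Finset.sum_congr rfl fun b _ => Finset.sum_congr rfl fun j _ => by
            rw [key b j]
      _ = ∑ b, ∑ c, ∑ k, ∑ j, (Jac C.φi (C.φ u.1) a b * Jac C.ψ u.2.1 j i)
            * (Jac C.φ u.1 b c * Jac C.ψi (C.ψ u.2.1) k j * delPform N c k u ξ) := by
          exact Finset.sum_congr rfl fun b _ =>
            sum_mul_swap0 (fun j => Jac C.φi (C.φ u.1) a b * Jac C.ψ u.2.1 j i)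
              (fun j c k => Jac C.φ u.1 b c * Jac C.ψi (C.ψ u.2.1) k j * delPform N c k u ξ)
      _ = ∑ c, ∑ k, ∑ b, ∑ j, (Jac C.φi (C.φ u.1) a b * Jac C.ψ u.2.1 j i)
            * (Jac C.φ u.1 b c * Jac C.ψi (C.ψ u.2.1) k j * delPform N c k u ξ) :=
          swap30 _
      _ = ∑ c, ∑ k, ((∑ b, Jac C.φi (C.φ u.1) a b * Jac C.φ u.1 b c)
            * (∑ j, Jac C.ψi (C.ψ u.2.1) k j * Jac C.ψ u.2.1 j i)) * delPform N c k u ξ := by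
          refine Finset.sum_congr rfl fun c _ => Finset.sum_congr rfl fun k _ => ?_
          rw [Finset.sum_mul_sum, Finset.sum_mul]
          simp only [Finset.sum_mul]
          exact Finset.sum_congr rfl fun b _ => Finset.sum_congr rfl fun j _ => by ring
      _ = ∑ c, ∑ k, ((if a = c then (1:ℝ) else 0) * (if k = i then (1:ℝ) else 0))
            * delPform N c k u ξ := by
          refine Finset.sum_congr rfl fun c _ => Finset.sum_congr rfl fun k _ => ?_
          rw [invφ a c, invψ k i]
      _ = delPform N a i u ξ := by
          simp [ite_mul, one_mul, zero_mul, Finset.sum_ite_eq, Finset.sum_ite_eq']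
  · intro u
    refine ⟨?_, ?_, ?_, ?_, ?_, ?_, ?_, ?_, ?_⟩ <;> intros <;>
      simp [NLC.dT, NLC.dX, dPnat, delPform, Pi.single_apply, mul_ite, mul_one, mul_zero,
        Finset.sum_ite_eq', Finset.sum_ite_eq, ite_mul, one_mul, zero_mul] <;>
      split_ifs <;> simp [Pi.single_apply, *]

end Statements
end

section
/- Let φ : U → Ũ and ψ : V → Ṽ determine a jet coordinate change Φ. Suppose smooth families κ^a_{bc} : U → ℝ and κ̃^a_{bc} : Ũ → ℝ satisfy the linear-connection transformation law κ̃^d_{ef}(φ(t)) · (∂t̃^e/∂t^b)(∂t̃^f/∂t^c) = κ^a_{bc}(t) · ∂t̃^d/∂t^a − ∂²t̃^d/∂t^b∂t^c, and smooth families γ^i_{jk} : V → ℝ and γ̃^i_{jk} : Ṽ → ℝ satisfy the analogous law with respect to ψ. Define N1^{(b)}_{(j)c}(t,x,p) = κ^b_{ac}(t) p_j^a and N2^{(b)}_{(j)k}(t,x,p) = −γ^i_{jk}(x) p_i^b, and define Ñ1, Ñ2 analogously from κ̃, γ̃. Then N = (N1, N2) and Ñ = (Ñ1, Ñ2) are related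 by the transformation rule (7) under Φ; i.e., these coefficients define a (canonical) nonlinear connection on the dual 1-jet space. -/
section AuxLemmas
open scoped BigOperators
variable {k : ℕ}  {f : (Fin k → ℝ) → (Fin k → ℝ)} {U : Set (Fin k → ℝ)}

lemma clm_eval (L : (Fin k → ℝ) →L[ℝ] (Fin k → ℝ)) (v : Fin k → ℝ) (b : Fin k) :
    L v b = ∑ a, v a * L (Pi.single a 1) b := by
  have hv : v = ∑ a, v a • (Pi.single a 1 : Fin k → ℝ) := by
    ext r; simp [Pi.single_apply]
  conv_lhs => rw [hv]
  rw [map_sum]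
  simp [Finset.sum_apply, mul_comm]

lemma jac_contDiffOn (hf : ContDiffOn ℝ (⊤ : ℕ∞) f U) (hU : IsOpen U) (b a : Fin k) :
    ContDiffOn ℝ (⊤ : ℕ∞) (fun s => Jac f s b a) U := by
  have h1 : ContDiffOn ℝ (⊤ : ℕ∞) (fun s => fderiv ℝ f s) U := hf.fderiv_of_isOpen hU (by simp)
  have h2 : ContDiff ℝ (⊤ : ℕ∞) (fun L : (Fin k → ℝ) →L[ℝ] (Fin k → ℝ) => L (Pi.single a 1) b) :=
    ((ContinuousLinearMap.proj b).comp
      ((ContinuousLinearMap.apply ℝ (Fin k → ℝ) (E := Fin k → ℝ)) (Pi.single a 1))).contDiff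
  exact h2.comp_contDiffOn h1

lemma jac_differentiableAt (hf : ContDiffOn ℝ (⊤ : ℕ∞) f U) (hU : IsOpen U) {t : Fin k → ℝ}
    (ht : t ∈ U) (b a : Fin k) : DifferentiableAt ℝ (fun s => Jac f s b a) t :=
  ((jac_contDiffOn hf hU b a).differentiableOn (by simp)).differentiableAt (hU.mem_nhds ht)

lemma jac_symm (hf : ContDiffOn ℝ (⊤ : ℕ∞) f U) (hU : IsOpen U) {t : Fin k → ℝ} (ht : t ∈ U)
    (b a c : Fin k) :
    fderiv ℝ (fun s => Jac f s b c) t (Pi.single a 1)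
      = fderiv ℝ (fun s => Jac f s b a) t (Pi.single c 1) := by
  have hct : ContDiffAt ℝ (⊤ : ℕ∞) f t := hf.contDiffAt (hU.mem_nhds ht)
  have hF : DifferentiableAt ℝ (fderiv ℝ f) t :=
    (hct.fderiv_right (m := 1) (WithTop.coe_le_coe.mpr le_top)).differentiableAt one_ne_zero
  have key : ∀ c' a' : Fin k, fderiv ℝ (fun s => Jac f s b c') t (Pi.single a' 1)
      = fderiv ℝ (fderiv ℝ f) t (Pi.single a' 1) (Pi.single c' 1) b := by
    intro c' a'
    have h2 : (fun s => Jac f s b c') =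
        (fun L : (Fin k → ℝ) →L[ℝ] (Fin k → ℝ) => L (Pi.single c' 1) b) ∘ (fderiv ℝ f) := rfl
    rw [h2]
    have he : (fun L : (Fin k → ℝ) →L[ℝ] (Fin k → ℝ) => L (Pi.single c' 1) b) =
        ⇑((ContinuousLinearMap.proj (R := ℝ) (φ := fun _ : Fin k => ℝ) b).comp
          ((ContinuousLinearMap.apply ℝ (Fin k → ℝ)) (Pi.single c' 1))) := rfl
    rw [he, fderiv_comp t (ContinuousLinearMap.differentiableAt _) hF,
      ContinuousLinearMap.fderiv]
    rfl
  rw [key c a, key a c]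
  have hsym : IsSymmSndFDerivAt ℝ f t := hct.isSymmSndFDerivAt (by rw [minSmoothness_of_isRCLikeNormedField]; exact WithTop.coe_le_coe.mpr le_top)
  exact congrFun (hsym (Pi.single a 1) (Pi.single c 1)) b

lemma jac_mul_inv {g : (Fin k → ℝ) → (Fin k → ℝ)} {t : Fin k → ℝ}
    (hU : IsOpen U) (ht : t ∈ U)
    (hfd : DifferentiableAt ℝ f t) (hgd : DifferentiableAt ℝ g (f t))
    (hid : ∀ s ∈ U, g (f s) = s) (b a : Fin k) :
    ∑ r, Jac g (f t) b r * Jac f t r a = if b = a then 1 else 0 := by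
  have hev : (fun s => g (f s)) =ᶠ[nhds t] id := by
    filter_upwards [hU.mem_nhds ht] with s hs using hid s hs
  have h1 : fderiv ℝ (fun s => g (f s)) t = ContinuousLinearMap.id ℝ (Fin k → ℝ) := by
    rw [hev.fderiv_eq]; exact fderiv_id
  have h2 : fderiv ℝ (fun s => g (f s)) t = (fderiv ℝ g (f t)).comp (fderiv ℝ f t) :=
    fderiv_comp t hgd hfd
  have h3 : ∀ v : Fin k → ℝ, fderiv ℝ g (f t) (fderiv ℝ f t v) = v := by
    intro v
    have := congrArg (fun L : (Fin k → ℝ) →L[ℝ] (Fin k → ℝ) => L v) (h2.symm.trans h1)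
    simpa using this
  have h4 := congrFun (h3 (Pi.single a 1)) b
  rw [clm_eval] at h4
  rw [show (if b = a then (1:ℝ) else 0) = (Pi.single a 1 : Fin k → ℝ) b by simp [Pi.single_apply, eq_comm]]
  rw [← h4]
  exact Finset.sum_congr rfl fun r _ => mul_comm _ _

lemma jac_inv_deriv {ψ ψi : (Fin k → ℝ) → (Fin k → ℝ)} {V V' : Set (Fin k → ℝ)}
    (hV : IsOpen V) (hV' : IsOpen V')
    (hψ : ContDiffOn ℝ (⊤ : ℕ∞) ψ V) (hψi : ContDiffOn ℝ (⊤ : ℕ∞) ψi V')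
    (hmaps : Set.MapsTo ψ V V')
    (hleft : ∀ x ∈ V, ψi (ψ x) = x) (hright : ∀ y ∈ V', ψ (ψi y) = y)
    {x : Fin k → ℝ} (hx : x ∈ V) (K j : Fin k) (ξ : Fin k → ℝ) :
    fderiv ℝ (fun y => Jac ψi (ψ y) K j) x ξ
      = -∑ r, ∑ l, Jac ψi (ψ x) K r * (fderiv ℝ (fun y => Jac ψ y r l) x ξ)
          * Jac ψi (ψ x) l j := by
  have hψd : ∀ y ∈ V, DifferentiableAt ℝ ψ y := fun y hy =>
    (hψ.differentiableOn (by simp)).differentiableAt (hV.mem_nhds hy)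
  have hψid : ∀ y ∈ V', DifferentiableAt ℝ ψi y := fun y hy =>
    (hψi.differentiableOn (by simp)).differentiableAt (hV'.mem_nhds hy)
  have hBcd : ∀ K' r : Fin k, ContDiffOn ℝ (⊤ : ℕ∞) (fun y => Jac ψi (ψ y) K' r) V :=
    fun K' r => (jac_contDiffOn hψi hV' K' r).comp hψ hmaps
  have hBd : ∀ K' r : Fin k, DifferentiableAt ℝ (fun y => Jac ψi (ψ y) K' r) x :=
    fun K' r => ((hBcd K' r).differentiableOn (by simp)).differentiableAt (hV.mem_nhds hx)
  have hAd : ∀ r l : Fin k, DifferentiableAt ℝ (fun y => Jac ψ y r l) x :=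
    fun r l => jac_differentiableAt hψ hV hx r l
  -- the key relation from differentiating B * A = δ
  have key : ∀ l, ∑ r, (fderiv ℝ (fun y => Jac ψi (ψ y) K r) x ξ * Jac ψ x r l
      + Jac ψi (ψ x) K r * fderiv ℝ (fun y => Jac ψ y r l) x ξ) = 0 := by
    intro l
    have hev : (fun y => ∑ r, Jac ψi (ψ y) K r * Jac ψ y r l)
        =ᶠ[nhds x] (fun _ => if K = l then (1:ℝ) else 0) := by
      filter_upwards [hV.mem_nhds hx] with y hy
      exact jac_mul_inv hV hy (hψd y hy) (hψid _ (hmaps hy)) hleft K l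
    have hz : fderiv ℝ (fun y => ∑ r, Jac ψi (ψ y) K r * Jac ψ y r l) x = 0 := by
      rw [hev.fderiv_eq]; exact fderiv_const_apply _
    have hsum : fderiv ℝ (fun y => ∑ r, Jac ψi (ψ y) K r * Jac ψ y r l) x
        = ∑ r, fderiv ℝ (fun y => Jac ψi (ψ y) K r * Jac ψ y r l) x := by
      exact fderiv_fun_sum (fun r _ => ((hBd K r).mul (hAd r l)))
    have hmul : ∀ r : Fin k, fderiv ℝ (fun y => Jac ψi (ψ y) K r * Jac ψ y r l) x ξ
        = fderiv ℝ (fun y => Jac ψi (ψ y) K r) x ξ * Jac ψ x r l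
          + Jac ψi (ψ x) K r * fderiv ℝ (fun y => Jac ψ y r l) x ξ := by
      intro r
      rw [fderiv_fun_mul (hBd K r) (hAd r l)]
      simp only [ContinuousLinearMap.add_apply, ContinuousLinearMap.smul_apply, smul_eq_mul]
      ring
    calc ∑ r, (fderiv ℝ (fun y => Jac ψi (ψ y) K r) x ξ * Jac ψ x r l
          + Jac ψi (ψ x) K r * fderiv ℝ (fun y => Jac ψ y r l) x ξ)
        = ∑ r, fderiv ℝ (fun y => Jac ψi (ψ y) K r * Jac ψ y r l) x ξ := by
          exact (Finset.sum_congr rfl fun r _ => (hmul r).symm)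
      _ = (∑ r, fderiv ℝ (fun y => Jac ψi (ψ y) K r * Jac ψ y r l) x) ξ := by
          simp [ContinuousLinearMap.sum_apply]
      _ = 0 := by rw [← hsum, hz]; rfl
  -- inverse identity  ∑ l, A r l * B l j = δ r j
  have hinv : ∀ r j' : Fin k, ∑ l, Jac ψ x r l * Jac ψi (ψ x) l j'
      = if r = j' then 1 else 0 := by
    intro r j'
    have hgd : DifferentiableAt ℝ ψ (ψi (ψ x)) := by
      rw [hleft x hx]; exact hψd x hx
    have := jac_mul_inv hV' (hmaps hx) (hψid _ (hmaps hx)) hgd hright r j'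
    rw [hleft x hx] at this
    rw [← this]
  -- combine
  have expand : fderiv ℝ (fun y => Jac ψi (ψ y) K j) x ξ
      = ∑ r, (fderiv ℝ (fun y => Jac ψi (ψ y) K r) x ξ)
          * (if r = j then (1:ℝ) else 0) := by
    simp
  rw [expand]
  have step : ∀ r, (fderiv ℝ (fun y => Jac ψi (ψ y) K r) x ξ) * (if r = j then (1:ℝ) else 0)
      = ∑ l, (fderiv ℝ (fun y => Jac ψi (ψ y) K r) x ξ) * (Jac ψ x r l * Jac ψi (ψ x) l j) := by
    intro r
    rw [← Finset.mul_sum, hinv r j]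
  rw [Finset.sum_congr rfl fun r _ => step r]
  rw [Finset.sum_comm]
  have key' : ∀ l, ∑ r, fderiv ℝ (fun y => Jac ψi (ψ y) K r) x ξ * Jac ψ x r l
      = -∑ r, Jac ψi (ψ x) K r * fderiv ℝ (fun y => Jac ψ y r l) x ξ := by
    intro l
    have h := key l
    rw [Finset.sum_add_distrib] at h
    linarith
  calc ∑ l, ∑ r, fderiv ℝ (fun y => Jac ψi (ψ y) K r) x ξ * (Jac ψ x r l * Jac ψi (ψ x) l j)
      = ∑ l, (∑ r, fderiv ℝ (fun y => Jac ψi (ψ y) K r) x ξ * Jac ψ x r l)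
          * Jac ψi (ψ x) l j := by
        refine Finset.sum_congr rfl fun l _ => ?_
        rw [Finset.sum_mul]
        exact Finset.sum_congr rfl fun r _ => by ring
    _ = ∑ l, (-∑ r, Jac ψi (ψ x) K r * fderiv ℝ (fun y => Jac ψ y r l) x ξ)
          * Jac ψi (ψ x) l j := by
        exact Finset.sum_congr rfl fun l _ => by rw [key' l]
    _ = -∑ l, ∑ r, Jac ψi (ψ x) K r * fderiv ℝ (fun y => Jac ψ y r l) x ξ
          * Jac ψi (ψ x) l j := by
        rw [← Finset.sum_neg_distrib]
        refine Finset.sum_congr rfl fun l _ => ?_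
        rw [neg_mul, Finset.sum_mul]
    _ = -∑ r, ∑ l, Jac ψi (ψ x) K r * fderiv ℝ (fun y => Jac ψ y r l) x ξ
          * Jac ψi (ψ x) l j := by rw [Finset.sum_comm]

lemma sum_prod3 {α β γ : Type*} [Fintype α] [Fintype β] [Fintype γ]
    (F : α → β → γ → ℝ) :
    ∑ x : α × β × γ, F x.1 x.2.1 x.2.2 = ∑ a, ∑ b, ∑ c, F a b c := by
  rw [Fintype.sum_prod_type]
  exact Finset.sum_congr rfl fun a _ => by rw [Fintype.sum_prod_type]

lemma sum_prod4 {α β γ δ : Type*} [Fintype α] [Fintype β] [Fintype γ] [Fintype δ]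
    (F : α → β → γ → δ → ℝ) :
    ∑ x : α × β × γ × δ, F x.1 x.2.1 x.2.2.1 x.2.2.2 = ∑ a, ∑ b, ∑ c, ∑ d, F a b c d := by
  rw [Fintype.sum_prod_type]
  exact Finset.sum_congr rfl fun a _ => sum_prod3 (fun b c d => F a b c d)


lemma phat_fderiv {m n : ℕ} (C : JetChange m n) {u : E m n} (hu : u ∈ C.src)
    (b : Fin m) (j : Fin n) (ξ : E m n) :
    fderiv ℝ (fun v => (C.Φ v).2.2 b j) u ξ = ∑ c, ∑ k,
      (fderiv ℝ (fun s => Jac C.φ s b c) u.1 ξ.1 * Jac C.ψi (C.ψ u.2.1) k j * u.2.2 c k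
      + Jac C.φ u.1 b c * fderiv ℝ (fun y => Jac C.ψi (C.ψ y) k j) u.2.1 ξ.2.1 * u.2.2 c k
      + Jac C.φ u.1 b c * Jac C.ψi (C.ψ u.2.1) k j * ξ.2.2 c k) := by
  have hT : u.1 ∈ C.U := hu.1
  have hX : u.2.1 ∈ C.V := hu.2.1
  have H1 : ∀ c, HasFDerivAt (fun v : E m n => Jac C.φ v.1 b c)
      ((fderiv ℝ (fun s => Jac C.φ s b c) u.1).comp
        (ContinuousLinearMap.fst ℝ (Fin m → ℝ) ((Fin n → ℝ) × (Fin m → Fin n → ℝ)))) u :=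
    fun c => ((jac_differentiableAt C.hφ C.hUopen hT b c).hasFDerivAt).comp u hasFDerivAt_fst
  have hBd : ∀ k' : Fin n, DifferentiableAt ℝ (fun y => Jac C.ψi (C.ψ y) k' j) u.2.1 :=
    fun k' => (((jac_contDiffOn C.hψi C.hV'open k' j).comp C.hψ
      C.hψmaps).differentiableOn (by simp)).differentiableAt (C.hVopen.mem_nhds hX)
  have H2 : ∀ k' : Fin n, HasFDerivAt (fun v : E m n => Jac C.ψi (C.ψ v.2.1) k' j)
      ((fderiv ℝ (fun y => Jac C.ψi (C.ψ y) k' j) u.2.1).comp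
        ((ContinuousLinearMap.fst ℝ (Fin n → ℝ) (Fin m → Fin n → ℝ)).comp
          (ContinuousLinearMap.snd ℝ (Fin m → ℝ) ((Fin n → ℝ) × (Fin m → Fin n → ℝ))))) u :=
    fun k' => by
      have h := ((hBd k').hasFDerivAt).comp u ((hasFDerivAt_fst (p := u.2)).comp u (hasFDerivAt_snd (p := u)))
      exact h
  have H3 : ∀ (c : Fin m) (k' : Fin n), HasFDerivAt (fun v : E m n => v.2.2 c k')
      (((ContinuousLinearMap.proj (R := ℝ) (φ := fun _ : Fin n => ℝ) k').comp
        ((ContinuousLinearMap.proj (R := ℝ) (φ := fun _ : Fin m => Fin n → ℝ) c).comp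
          ((ContinuousLinearMap.snd ℝ (Fin n → ℝ) (Fin m → Fin n → ℝ)).comp
            (ContinuousLinearMap.snd ℝ (Fin m → ℝ)
              ((Fin n → ℝ) × (Fin m → Fin n → ℝ))))))) u :=
    fun c k' => ContinuousLinearMap.hasFDerivAt
      ((ContinuousLinearMap.proj (R := ℝ) (φ := fun _ : Fin n => ℝ) k').comp
        ((ContinuousLinearMap.proj (R := ℝ) (φ := fun _ : Fin m => Fin n → ℝ) c).comp
          ((ContinuousLinearMap.snd ℝ (Fin n → ℝ) (Fin m → Fin n → ℝ)).comp
            (ContinuousLinearMap.snd ℝ (Fin m → ℝ)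
              ((Fin n → ℝ) × (Fin m → Fin n → ℝ))))))
  have heq : (fun v => (C.Φ v).2.2 b j)
      = fun v : E m n => ∑ c, ∑ k', Jac C.φ v.1 b c * Jac C.ψi (C.ψ v.2.1) k' j * v.2.2 c k' :=
    rfl
  rw [heq, HasFDerivAt.fderiv (HasFDerivAt.fun_sum fun c _ =>
    HasFDerivAt.fun_sum fun k' _ => ((H1 c).fun_mul (H2 k')).fun_mul (H3 c k'))]
  simp only [ContinuousLinearMap.coe_sum', Finset.sum_apply, ContinuousLinearMap.add_apply,
    ContinuousLinearMap.smul_apply, ContinuousLinearMap.coe_comp', Function.comp_apply,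
    ContinuousLinearMap.coe_fst', ContinuousLinearMap.coe_snd', ContinuousLinearMap.proj_apply,
    smul_eq_mul]
  exact Finset.sum_congr rfl fun c _ => Finset.sum_congr rfl fun k' _ => by ring


end AuxLemmas

section Statements

open scoped BigOperators

theorem stmt3 (m n : ℕ) (C : JetChange m n)
    (κ : Fin m → Fin m → Fin m → (Fin m → ℝ) → ℝ)
    (κ' : Fin m → Fin m → Fin m → (Fin m → ℝ) → ℝ)
    (γ : Fin n → Fin n → Fin n → (Fin n → ℝ) → ℝ)
    (γ' : Fin n → Fin n → Fin n → (Fin n → ℝ) → ℝ)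
    (hκ : ∀ a b c, ContDiffOn ℝ (⊤ : ℕ∞) (κ a b c) C.U)
    (hκ' : ∀ a b c, ContDiffOn ℝ (⊤ : ℕ∞) (κ' a b c) C.U')
    (hγ : ∀ i j k, ContDiffOn ℝ (⊤ : ℕ∞) (γ i j k) C.V)
    (hγ' : ∀ i j k, ContDiffOn ℝ (⊤ : ℕ∞) (γ' i j k) C.V')
    (hκlaw : ∀ t ∈ C.U, ∀ d b c : Fin m,
      ∑ e, ∑ f, κ' d e f (C.φ t) * Jac C.φ t e b * Jac C.φ t f c
        = (∑ a, κ a b c t * Jac C.φ t d a)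
          - fderiv ℝ (fun s => Jac C.φ s d c) t (Pi.single b 1))
    (hγlaw : ∀ x ∈ C.V, ∀ l j k : Fin n,
      ∑ r, ∑ s, γ' l r s (C.ψ x) * Jac C.ψ x r j * Jac C.ψ x s k
        = (∑ i, γ i j k x * Jac C.ψ x l i)
          - fderiv ℝ (fun y => Jac C.ψ y l k) x (Pi.single j 1)) :
    C.Rule7
      ⟨fun a i b u => ∑ c, κ a c b u.1 * u.2.2 c i,
       fun a i j u => -∑ k, γ k i j u.2.1 * u.2.2 a k⟩
      ⟨fun a i b u => ∑ c, κ' a c b u.1 * u.2.2 c i,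
       fun a i j u => -∑ k, γ' k i j u.2.1 * u.2.2 a k⟩ := by
  intro u hu
  have hT : u.1 ∈ C.U := hu.1
  have hX : u.2.1 ∈ C.V := hu.2.1
  constructor
  · intro b j a
    rw [phat_fderiv C hu b j (dTnat m n a)]
    have hsingle : ∀ c : Fin m, fderiv ℝ (fun s => Jac C.φ s b c) u.1 (Pi.single a 1)
        = (∑ a', κ a' c a u.1 * Jac C.φ u.1 b a')
          - ∑ e, ∑ f, κ' b e f (C.φ u.1) * Jac C.φ u.1 e c * Jac C.φ u.1 f a := by
      intro c
      rw [jac_symm C.hφ C.hUopen hT b a c]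
      have h := hκlaw u.1 hT b c a
      linarith
    have hΦ1 : (C.Φ u).1 = C.φ u.1 := rfl
    have hΦp : ∀ e, (C.Φ u).2.2 e j
        = ∑ d, ∑ k, Jac C.φ u.1 e d * Jac C.ψi (C.ψ u.2.1) k j * u.2.2 d k := fun e => rfl
    simp only [dTnat, map_zero, mul_zero, zero_mul, add_zero, Pi.zero_apply, hΦ1, hΦp, hsingle]
    set A := Jac C.φ u.1 with hA
    set B := Jac C.ψi (C.ψ u.2.1) with hB
    set P := u.2.2 with hP
    set T := C.φ u.1 with hT'
    simp only [Finset.mul_sum, Finset.sum_mul, sub_mul, Finset.sum_sub_distrib]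
    have hS2a :
        (∑ x : Fin m, ∑ y : Fin n, ∑ z : Fin m, κ z x a u.1 * A b z * B y j * P x y)
          = ∑ x : Fin m, ∑ y : Fin n, ∑ z : Fin m, κ x z a u.1 * P z y * A b x * B y j := by
      rw [← sum_prod3 (fun x y z => κ z x a u.1 * A b z * B y j * P x y),
          ← sum_prod3 (fun x y z => κ x z a u.1 * P z y * A b x * B y j)]
      exact Fintype.sum_equiv
        ⟨fun x => (x.2.2, x.2.1, x.1), fun x => (x.2.2, x.2.1, x.1),
          fun _ => rfl, fun _ => rfl⟩ _ _ (fun x => by simp only [Equiv.coe_fn_mk]; ring)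
    rw [hS2a, sub_sub_cancel]
    rw [← sum_prod4 (fun c e d k => κ' b e c T * (A e d * B k j * P d k) * A c a),
        ← sum_prod4 (fun c k e f => κ' b e f T * A e c * A f a * B k j * P c k)]
    exact Fintype.sum_equiv
      ⟨fun x => (x.2.2.1, x.2.2.2, x.2.1, x.1), fun y => (y.2.2.2, y.2.2.1, y.1, y.2.1),
        fun _ => rfl, fun _ => rfl⟩ _ _ (fun x => by simp only [Equiv.coe_fn_mk]; ring)
  · intro b j i
    rw [phat_fderiv C hu b j (dXnat m n i)]
    -- inverse matrix identities
    have hBA : ∀ k q : Fin n, ∑ r, Jac C.ψi (C.ψ u.2.1) k r * Jac C.ψ u.2.1 r q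
        = if k = q then 1 else 0 := by
      intro k q
      exact jac_mul_inv C.hVopen hX
        ((C.hψ.differentiableOn (by simp)).differentiableAt (C.hVopen.mem_nhds hX))
        ((C.hψi.differentiableOn (by simp)).differentiableAt (C.hV'open.mem_nhds (C.hψmaps hX)))
        C.hψleft k q
    have hAB : ∀ p q : Fin n, ∑ r, Jac C.ψ u.2.1 p r * Jac C.ψi (C.ψ u.2.1) r q
        = if p = q then 1 else 0 := by
      intro p q
      have hgd : DifferentiableAt ℝ C.ψ (C.ψi (C.ψ u.2.1)) := by
        rw [C.hψleft u.2.1 hX]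
        exact (C.hψ.differentiableOn (by simp)).differentiableAt (C.hVopen.mem_nhds hX)
      have := jac_mul_inv C.hV'open (C.hψmaps hX)
        ((C.hψi.differentiableOn (by simp)).differentiableAt (C.hV'open.mem_nhds (C.hψmaps hX)))
        hgd C.hψright p q
      rwa [C.hψleft u.2.1 hX] at this
    -- the derivative of the inverse Jacobian, in final form
    have hD2 : ∀ k : Fin n, fderiv ℝ (fun y => Jac C.ψi (C.ψ y) k j) u.2.1 (Pi.single i 1)
        = -(∑ l, γ k l i u.2.1 * Jac C.ψi (C.ψ u.2.1) l j)
          + ∑ r, ∑ s, Jac C.ψi (C.ψ u.2.1) k r * γ' r j s (C.ψ u.2.1) * Jac C.ψ u.2.1 s i := by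
      intro k
      rw [jac_inv_deriv C.hVopen C.hV'open C.hψ C.hψi C.hψmaps C.hψleft C.hψright hX k j]
      have hF : ∀ r l : Fin n, fderiv ℝ (fun y => Jac C.ψ y r l) u.2.1 (Pi.single i 1)
          = (∑ q, γ q l i u.2.1 * Jac C.ψ u.2.1 r q)
            - ∑ r', ∑ s, γ' r r' s (C.ψ u.2.1) * Jac C.ψ u.2.1 r' l * Jac C.ψ u.2.1 s i := by
        intro r l
        rw [jac_symm C.hψ C.hVopen hX r i l]
        have := hγlaw u.2.1 hX r l i
        linarith
      simp only [hF]
      have hX1 : ∑ r, ∑ l, Jac C.ψi (C.ψ u.2.1) k r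
            * (∑ q, γ q l i u.2.1 * Jac C.ψ u.2.1 r q) * Jac C.ψi (C.ψ u.2.1) l j
          = ∑ l, γ k l i u.2.1 * Jac C.ψi (C.ψ u.2.1) l j := by
        calc ∑ r, ∑ l, Jac C.ψi (C.ψ u.2.1) k r
              * (∑ q, γ q l i u.2.1 * Jac C.ψ u.2.1 r q) * Jac C.ψi (C.ψ u.2.1) l j
            = ∑ l, ∑ q, (∑ r, Jac C.ψi (C.ψ u.2.1) k r * Jac C.ψ u.2.1 r q)
                * (γ q l i u.2.1 * Jac C.ψi (C.ψ u.2.1) l j) := by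
              simp only [Finset.sum_mul, Finset.mul_sum]
              rw [← sum_prod3 (fun r l q => Jac C.ψi (C.ψ u.2.1) k r
                  * (γ q l i u.2.1 * Jac C.ψ u.2.1 r q) * Jac C.ψi (C.ψ u.2.1) l j),
                ← sum_prod3 (fun l q r => Jac C.ψi (C.ψ u.2.1) k r * Jac C.ψ u.2.1 r q
                  * (γ q l i u.2.1 * Jac C.ψi (C.ψ u.2.1) l j))]
              exact Fintype.sum_equiv
                ⟨fun x => (x.2.1, x.2.2, x.1), fun y => (y.2.2, y.1, y.2.1),
                  fun _ => rfl, fun _ => rfl⟩ _ _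
                (fun x => by simp only [Equiv.coe_fn_mk]; ring)
          _ = ∑ l, ∑ q, (if k = q then (1:ℝ) else 0)
                * (γ q l i u.2.1 * Jac C.ψi (C.ψ u.2.1) l j) := by
              simp only [hBA]
          _ = ∑ l, γ k l i u.2.1 * Jac C.ψi (C.ψ u.2.1) l j := by
              simp [ite_mul, Finset.sum_ite_eq]
      have hX2 : ∑ r, ∑ l, Jac C.ψi (C.ψ u.2.1) k r
            * (∑ r', ∑ s, γ' r r' s (C.ψ u.2.1) * Jac C.ψ u.2.1 r' l * Jac C.ψ u.2.1 s i)
            * Jac C.ψi (C.ψ u.2.1) l j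
          = ∑ r, ∑ s, Jac C.ψi (C.ψ u.2.1) k r * γ' r j s (C.ψ u.2.1)
              * Jac C.ψ u.2.1 s i := by
        calc ∑ r, ∑ l, Jac C.ψi (C.ψ u.2.1) k r
              * (∑ r', ∑ s, γ' r r' s (C.ψ u.2.1) * Jac C.ψ u.2.1 r' l * Jac C.ψ u.2.1 s i)
              * Jac C.ψi (C.ψ u.2.1) l j
            = ∑ r, ∑ r', ∑ s, (∑ l, Jac C.ψ u.2.1 r' l * Jac C.ψi (C.ψ u.2.1) l j)
                * (Jac C.ψi (C.ψ u.2.1) k r * γ' r r' s (C.ψ u.2.1) * Jac C.ψ u.2.1 s i) := by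
              simp only [Finset.sum_mul, Finset.mul_sum]
              rw [← sum_prod4 (fun r l r' s => Jac C.ψi (C.ψ u.2.1) k r
                  * (γ' r r' s (C.ψ u.2.1) * Jac C.ψ u.2.1 r' l * Jac C.ψ u.2.1 s i)
                  * Jac C.ψi (C.ψ u.2.1) l j),
                ← sum_prod4 (fun r r' s l => Jac C.ψ u.2.1 r' l * Jac C.ψi (C.ψ u.2.1) l j
                  * (Jac C.ψi (C.ψ u.2.1) k r * γ' r r' s (C.ψ u.2.1)
                    * Jac C.ψ u.2.1 s i))]
              exact Fintype.sum_equiv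
                ⟨fun x => (x.1, x.2.2.1, x.2.2.2, x.2.1), fun y => (y.1, y.2.2.2, y.2.1, y.2.2.1),
                  fun _ => rfl, fun _ => rfl⟩ _ _
                (fun x => by simp only [Equiv.coe_fn_mk]; ring)
          _ = ∑ r, ∑ r', ∑ s, (if r' = j then (1:ℝ) else 0)
                * (Jac C.ψi (C.ψ u.2.1) k r * γ' r r' s (C.ψ u.2.1) * Jac C.ψ u.2.1 s i) := by
              simp only [hAB]
          _ = ∑ r, ∑ s, Jac C.ψi (C.ψ u.2.1) k r * γ' r j s (C.ψ u.2.1)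
              * Jac C.ψ u.2.1 s i := by
              refine Finset.sum_congr rfl fun r _ => ?_
              rw [Finset.sum_comm]
              simp [ite_mul, Finset.sum_ite_eq']
      simp only [mul_sub, sub_mul, Finset.sum_sub_distrib]
      rw [hX1, hX2]
      ring
    have hΦp2 : ∀ l : Fin n, (C.Φ u).2.2 b l
        = ∑ c, ∑ s, Jac C.φ u.1 b c * Jac C.ψi (C.ψ u.2.1) s l * u.2.2 c s := fun l => rfl
    have hΦx : (C.Φ u).2.1 = C.ψ u.2.1 := rfl
    simp only [dXnat, map_zero, zero_mul, mul_zero, zero_add, add_zero, Pi.zero_apply,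
      hΦx, hΦp2, hD2]
    set A := Jac C.φ u.1 with hA
    set B := Jac C.ψi (C.ψ u.2.1) with hB
    set Aψ := Jac C.ψ u.2.1 with hAψ
    set P := u.2.2 with hP
    set Y := C.ψ u.2.1 with hY
    simp only [neg_mul, mul_neg, neg_add, mul_add, add_mul, Finset.sum_mul, Finset.mul_sum,
      Finset.sum_add_distrib, Finset.sum_neg_distrib, sub_neg_eq_add, sub_eq_add_neg,
      neg_neg]
    have hT12 : ∑ c : Fin m, ∑ k : Fin n, ∑ l : Fin n, A b c * (γ k l i u.2.1 * B l j) * P c k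
        = ∑ c : Fin m, ∑ k : Fin n, ∑ q : Fin n, γ q k i u.2.1 * P c q * A b c * B k j := by
      rw [← sum_prod3 (fun c k l => A b c * (γ k l i u.2.1 * B l j) * P c k),
        ← sum_prod3 (fun c k q => γ q k i u.2.1 * P c q * A b c * B k j)]
      exact Fintype.sum_equiv
        ⟨fun x => (x.1, x.2.2, x.2.1), fun y => (y.1, y.2.2, y.2.1),
          fun _ => rfl, fun _ => rfl⟩ _ _
        (fun x => by simp only [Equiv.coe_fn_mk]; ring)
    have hLT : ∑ k : Fin n, ∑ l : Fin n, ∑ c : Fin m, ∑ s : Fin n,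
          γ' l j k Y * (A b c * B s l * P c s) * Aψ k i
        = ∑ c : Fin m, ∑ k : Fin n, ∑ r : Fin n, ∑ s : Fin n,
          A b c * (B k r * γ' r j s Y * Aψ s i) * P c k := by
      rw [← sum_prod4 (fun k l c s => γ' l j k Y * (A b c * B s l * P c s) * Aψ k i),
        ← sum_prod4 (fun c k r s => A b c * (B k r * γ' r j s Y * Aψ s i) * P c k)]
      exact Fintype.sum_equiv
        ⟨fun x => (x.2.2.1, x.2.2.2, x.2.1, x.1), fun y => (y.2.2.2, y.2.2.1, y.1, y.2.1),
          fun _ => rfl, fun _ => rfl⟩ _ _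
        (fun x => by simp only [Equiv.coe_fn_mk]; ring)
    rw [hT12, hLT]
    ring

end Statements
end

section
/- For any nonlinear connection N = (N1, N2) on E, the Lie brackets of the adapted frame vector fields are: [δ/δt^b, δ/δt^c] = R^{(a)}_{(i)bc} ∂/∂p_i^a, [δ/δt^b, δ/δx^k] = R^{(a)}_{(i)bk} ∂/∂p_i^a, [δ/δx^j, δ/δx^k] = R^{(a)}_{(i)jk} ∂/∂p_i^a, [δ/δt^b, ∂/∂p_k^c] = B^{(a)(k)}_{(i)b(c)} ∂/∂p_i^a, [δ/δx^j, ∂/∂p_k^c] = B^{(a)(k)}_{(i)j(c)} ∂/∂p_i^a, and [∂/∂p_j^b, ∂/∂p_k^c] = 0. -/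
section Helpers

open scoped BigOperators

variable {m n : ℕ}

/-- derivative of a frame-type vector field with constant horizontal parts -/
lemma frame_hasFDerivAt (c1 : Fin m → ℝ) (c2 : Fin n → ℝ)
    (g : Fin m → Fin n → E m n → ℝ) (D : Fin m → Fin n → (E m n →L[ℝ] ℝ)) (u : E m n)
    (hg : ∀ a i, HasFDerivAt (g a i) (D a i) u) :
    HasFDerivAt (fun v => ((c1, c2, fun a i => g a i v) : E m n))
      (((0 : E m n →L[ℝ] (Fin m → ℝ))).prod
        (((0 : E m n →L[ℝ] (Fin n → ℝ))).prod
          (ContinuousLinearMap.pi fun a => ContinuousLinearMap.pi fun i => D a i))) u := by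
  exact HasFDerivAt.prodMk (hasFDerivAt_const c1 u) (HasFDerivAt.prodMk (hasFDerivAt_const c2 u)
    (hasFDerivAt_pi.2 fun a => hasFDerivAt_pi.2 fun i => hg a i))

lemma fderiv_frame (c1 : Fin m → ℝ) (c2 : Fin n → ℝ)
    (g : Fin m → Fin n → E m n → ℝ) (u : E m n)
    (hg : ∀ a i, DifferentiableAt ℝ (g a i) u) (ξ : E m n) :
    fderiv ℝ (fun v => ((c1, c2, fun a i => g a i v) : E m n)) u ξ
      = ((0, 0, fun a i => fderiv ℝ (g a i) u ξ) : E m n) := by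
  rw [(frame_hasFDerivAt c1 c2 g (fun a i => fderiv ℝ (g a i) u) u
    (fun a i => (hg a i).hasFDerivAt)).fderiv]
  rfl

end Helpers

section Statements

open scoped BigOperators

theorem stmt4 (m n : ℕ) (U : Set (Fin m → ℝ)) (V : Set (Fin n → ℝ))
    (hU : IsOpen U) (hV : IsOpen V) (N : NLC m n) (hN : N.SmoothOn (modelSet U V)) :
    ∀ u ∈ modelSet U V,
      (∀ b c : Fin m, lie (N.dT b) (N.dT c) u
          = ((0, 0, fun a i => N.R1 a i b c u) : E m n))
      ∧ (∀ (b : Fin m) (k : Fin n), lie (N.dT b) (N.dX k) u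
          = ((0, 0, fun a i => N.Rmix a i b k u) : E m n))
      ∧ (∀ j k : Fin n, lie (N.dX j) (N.dX k) u
          = ((0, 0, fun a i => N.R2 a i j k u) : E m n))
      ∧ (∀ (b c : Fin m) (k : Fin n), lie (N.dT b) (dPfield m n c k) u
          = ((0, 0, fun a i => N.B1 a i b c k u) : E m n))
      ∧ (∀ (j : Fin n) (c : Fin m) (k : Fin n), lie (N.dX j) (dPfield m n c k) u
          = ((0, 0, fun a i => N.B2 a i j c k u) : E m n))
      ∧ (∀ (b : Fin m) (j : Fin n) (c : Fin m) (k : Fin n),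
          lie (dPfield m n b j) (dPfield m n c k) u = 0) := by
  intro u hu
  have hdmem : modelSet U V ∈ nhds u := (hU.prod (hV.prod isOpen_univ)).mem_nhds hu
  have hd1 : ∀ a i b, DifferentiableAt ℝ (N.N1 a i b) u := fun a i b =>
    ((hN.1 a i b).differentiableOn (by simp)).differentiableAt hdmem
  have hd2 : ∀ a i j, DifferentiableAt ℝ (N.N2 a i j) u := fun a i j =>
    ((hN.2 a i j).differentiableOn (by simp)).differentiableAt hdmem
  have hfT : ∀ (b : Fin m) (ξ : E m n), fderiv ℝ (N.dT b) u ξ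
      = ((0, 0, fun a i => -(fderiv ℝ (N.N1 a i b) u ξ)) : E m n) := by
    intro b ξ
    have h := fderiv_frame (Pi.single b 1) (0 : Fin n → ℝ)
      (fun a i v => -(N.N1 a i b v)) u (fun a i => (hd1 a i b).neg) ξ
    unfold NLC.dT
    rw [h]
    simp [fderiv_neg]
  have hfX : ∀ (j : Fin n) (ξ : E m n), fderiv ℝ (N.dX j) u ξ
      = ((0, 0, fun a i => -(fderiv ℝ (N.N2 a i j) u ξ)) : E m n) := by
    intro j ξ
    have h := fderiv_frame (0 : Fin m → ℝ) (Pi.single j 1)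
      (fun a i v => -(N.N2 a i j v)) u (fun a i => (hd2 a i j).neg) ξ
    unfold NLC.dX
    rw [h]
    simp [fderiv_neg]
  have hfP : ∀ (c : Fin m) (k : Fin n), fderiv ℝ (dPfield m n c k) u = 0 := by
    intro c k
    unfold dPfield
    exact fderiv_const_apply _
  refine ⟨?_, ?_, ?_, ?_, ?_, ?_⟩
  · intro b c
    simp only [lie]
    rw [hfT c (N.dT b u), hfT b (N.dT c u)]
    refine Prod.ext (by first | rfl | simp) (Prod.ext (by first | rfl | simp) (funext fun a => funext fun i => ?_))
    simp only [Prod.snd_sub, Pi.sub_apply, NLC.R1, NLC.delT]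
    ring
  · intro b k
    simp only [lie]
    rw [hfX k (N.dT b u), hfT b (N.dX k u)]
    refine Prod.ext (by first | rfl | simp) (Prod.ext (by first | rfl | simp) (funext fun a => funext fun i => ?_))
    simp only [Prod.snd_sub, Pi.sub_apply, NLC.Rmix, NLC.delT, NLC.delX]
    ring
  · intro j k
    simp only [lie]
    rw [hfX k (N.dX j u), hfX j (N.dX k u)]
    refine Prod.ext (by first | rfl | simp) (Prod.ext (by first | rfl | simp) (funext fun a => funext fun i => ?_))
    simp only [Prod.snd_sub, Pi.sub_apply, NLC.R2, NLC.delX]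
    ring
  · intro b c k
    simp only [lie]
    rw [hfP c k, hfT b (dPfield m n c k u)]
    refine Prod.ext (by first | rfl | simp) (Prod.ext (by first | rfl | simp) (funext fun a => funext fun i => ?_))
    simp [ContinuousLinearMap.zero_apply, Prod.snd_sub, Pi.sub_apply,
      NLC.B1, delP, dPfield]
  · intro j c k
    simp only [lie]
    rw [hfP c k, hfX j (dPfield m n c k u)]
    refine Prod.ext (by first | rfl | simp) (Prod.ext (by first | rfl | simp) (funext fun a => funext fun i => ?_))
    simp [ContinuousLinearMap.zero_apply, Prod.snd_sub, Pi.sub_apply,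
      NLC.B2, delP, dPfield]
  · intro b j c k
    simp only [lie]
    rw [hfP c k, hfP b j]
    simp

end Statements
end

section
/- For a nonlinear connection N = (N1, N2) on E, the horizontal distribution H (assigning to each u ∈ E the span H(u) of the adapted frame vectors δ/δt^a(u) and δ/δx^i(u)) is involutive — that is, for any two smooth vector fields X, Y on E with X(u), Y(u) ∈ H(u) for all u, also [X,Y](u) ∈ H(u) for all u — if and only if the three d-tensors R^{(a)}_{(i)bc}, R^{(a)}_{(i)bk}, R^{(a)}_{(i)jk} vanish identically on E. -/
noncomputable section Helpers
open scoped BigOperators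

namespace Stmt5Aux

variable {m n : ℕ}

def πt (m n : ℕ) (b : Fin m) : E m n →L[ℝ] ℝ :=
  (ContinuousLinearMap.proj b).comp (ContinuousLinearMap.fst ℝ _ _)

def πx (m n : ℕ) (j : Fin n) : E m n →L[ℝ] ℝ :=
  (ContinuousLinearMap.proj j).comp ((ContinuousLinearMap.fst ℝ _ _).comp (ContinuousLinearMap.snd ℝ _ _))

def πp (m n : ℕ) (a : Fin m) (i : Fin n) : E m n →L[ℝ] ℝ :=
  ((ContinuousLinearMap.proj i).comp (ContinuousLinearMap.proj (R := ℝ) (φ := fun _ : Fin m => Fin n → ℝ) a)).comp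
    ((ContinuousLinearMap.snd ℝ _ _).comp (ContinuousLinearMap.snd ℝ _ _))

/-- The adapted one-form `δp_i^a` at `u` as a continuous linear functional. -/
def ωL (N : NLC m n) (a : Fin m) (i : Fin n) (u : E m n) : E m n →L[ℝ] ℝ :=
  πp m n a i + (∑ b, N.N1 a i b u • πt m n b) + ∑ j, N.N2 a i j u • πx m n j

lemma ωL_apply (N : NLC m n) (a : Fin m) (i : Fin n) (u ξ : E m n) :
    ωL N a i u ξ = ξ.2.2 a i + (∑ b, N.N1 a i b u * ξ.1 b) + ∑ j, N.N2 a i j u * ξ.2.1 j := by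
  simp only [ωL, ContinuousLinearMap.add_apply, ContinuousLinearMap.coe_sum',
    Finset.sum_apply, ContinuousLinearMap.smul_apply, smul_eq_mul]
  rfl

lemma sum_single_mul {k : ℕ} (f : Fin k → ℝ) (c : Fin k) :
    (∑ b, f b * (Pi.single c (1:ℝ) : Fin k → ℝ) b) = f c := by
  rw [Finset.sum_eq_single c]
  · simp
  · intro b _ hb; simp [Pi.single_apply, hb.symm]
  · simp

lemma sum_mul_single {k : ℕ} (f : Fin k → ℝ) (c : Fin k) :
    (∑ b, f b * (Pi.single b (1:ℝ) : Fin k → ℝ) c) = f c := by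
  rw [Finset.sum_eq_single c]
  · simp
  · intro b _ hb; simp [Pi.single_apply, hb]
  · simp

lemma ωL_dT (N : NLC m n) (a : Fin m) (i : Fin n) (u : E m n) (c : Fin m) :
    ωL N a i u (N.dT c u) = 0 := by
  simp only [ωL_apply, NLC.dT, sum_single_mul]
  simp

lemma ωL_dX (N : NLC m n) (a : Fin m) (i : Fin n) (u : E m n) (k : Fin n) :
    ωL N a i u (N.dX k u) = 0 := by
  simp only [ωL_apply, NLC.dX, sum_single_mul]
  simp

lemma horiz_decomp (N : NLC m n) (u ξ : E m n) (h : ∀ a i, ωL N a i u ξ = 0) :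
    ξ = (∑ c, ξ.1 c • N.dT c u) + ∑ k, ξ.2.1 k • N.dX k u := by
  have h3 : ∀ a i, ξ.2.2 a i
      = -(∑ b, N.N1 a i b u * ξ.1 b) - ∑ j, N.N2 a i j u * ξ.2.1 j := by
    intro a i
    have := h a i
    rw [ωL_apply] at this
    linarith
  refine Prod.ext ?_ (Prod.ext ?_ ?_)
  · simp only [Prod.fst_add, Prod.fst_sum, NLC.dT, NLC.dX, Prod.smul_fst]
    funext b
    simp only [Pi.add_apply, Finset.sum_apply, Pi.smul_apply, smul_eq_mul,
      sum_mul_single, Pi.zero_apply, mul_zero, Finset.sum_const_zero, add_zero]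
  · simp only [Prod.snd_add, Prod.snd_sum, Prod.fst_add, Prod.fst_sum, NLC.dT, NLC.dX,
      Prod.smul_snd, Prod.smul_fst]
    funext j
    simp only [Pi.add_apply, Finset.sum_apply, Pi.smul_apply, smul_eq_mul,
      sum_mul_single, Pi.zero_apply, mul_zero, Finset.sum_const_zero, zero_add]
  · simp only [Prod.snd_add, Prod.snd_sum, Prod.smul_snd, NLC.dT, NLC.dX]
    funext a i
    simp only [Pi.add_apply, Finset.sum_apply, Pi.smul_apply, smul_eq_mul, h3 a i,
      mul_neg]
    simp only [Finset.sum_neg_distrib, sub_eq_add_neg]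
    congr 2 <;> exact Finset.sum_congr rfl fun x _ => mul_comm _ _

lemma mem_Hor_iff (N : NLC m n) (u ξ : E m n) :
    ξ ∈ N.Hor u ↔ ∀ a i, ωL N a i u ξ = 0 := by
  constructor
  · intro hmem a i
    have hle : N.Hor u ≤ LinearMap.ker (ωL N a i u : E m n →ₗ[ℝ] ℝ) := by
      rw [NLC.Hor, Submodule.span_le]
      rintro v (⟨c, rfl⟩ | ⟨k, rfl⟩)
      · exact ωL_dT N a i u c
      · exact ωL_dX N a i u k
    exact hle hmem
  · intro h
    rw [horiz_decomp N u ξ h]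
    refine Submodule.add_mem _ (Submodule.sum_mem _ fun c _ => ?_)
      (Submodule.sum_mem _ fun k _ => ?_)
    · exact Submodule.smul_mem _ _ (Submodule.subset_span (Or.inl ⟨c, rfl⟩))
    · exact Submodule.smul_mem _ _ (Submodule.subset_span (Or.inr ⟨k, rfl⟩))




lemma fderiv_comp_clm (π : E m n →L[ℝ] ℝ) {F : E m n → E m n} {u : E m n}
    (hF : DifferentiableAt ℝ F u) (v : E m n) :
    fderiv ℝ (fun w => π (F w)) u v = π (fderiv ℝ F u v) := by
  rw [show (fun w => π (F w)) = π ∘ F from rfl, fderiv_comp u π.differentiableAt hF,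
    ContinuousLinearMap.fderiv]
  rfl

lemma fderiv_apply_fst {F : E m n → E m n} {u : E m n} (hF : DifferentiableAt ℝ F u)
    (b : Fin m) (v : E m n) :
    (fderiv ℝ F u v).1 b = fderiv ℝ (fun w => (F w).1 b) u v :=
  (fderiv_comp_clm (πt m n b) hF v).symm

lemma fderiv_apply_x {F : E m n → E m n} {u : E m n} (hF : DifferentiableAt ℝ F u)
    (j : Fin n) (v : E m n) :
    (fderiv ℝ F u v).2.1 j = fderiv ℝ (fun w => (F w).2.1 j) u v :=
  (fderiv_comp_clm (πx m n j) hF v).symm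

lemma fderiv_apply_p {F : E m n → E m n} {u : E m n} (hF : DifferentiableAt ℝ F u)
    (a : Fin m) (i : Fin n) (v : E m n) :
    (fderiv ℝ F u v).2.2 a i = fderiv ℝ (fun w => (F w).2.2 a i) u v :=
  (fderiv_comp_clm (πp m n a i) hF v).symm

lemma diffAt_fst {F : E m n → E m n} {u : E m n} (hF : DifferentiableAt ℝ F u) (b : Fin m) :
    DifferentiableAt ℝ (fun w => (F w).1 b) u :=
  ((πt m n b).differentiableAt.comp u hF : _)

lemma diffAt_x {F : E m n → E m n} {u : E m n} (hF : DifferentiableAt ℝ F u) (j : Fin n) :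
    DifferentiableAt ℝ (fun w => (F w).2.1 j) u :=
  ((πx m n j).differentiableAt.comp u hF : _)

lemma isOpen_modelSet {U : Set (Fin m → ℝ)} {V : Set (Fin n → ℝ)} (hU : IsOpen U)
    (hV : IsOpen V) : IsOpen (modelSet U V) :=
  hU.prod (hV.prod isOpen_univ)

lemma contDiffOn_dT {N : NLC m n} {S : Set (E m n)} (hN : N.SmoothOn S) (b : Fin m) :
    ContDiffOn ℝ (⊤ : ℕ∞) (N.dT b) S :=
  ContDiffOn.prodMk contDiffOn_const (ContDiffOn.prodMk contDiffOn_const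
    (contDiffOn_pi.2 fun a => contDiffOn_pi.2 fun i => (hN.1 a i b).neg))

lemma contDiffOn_dX {N : NLC m n} {S : Set (E m n)} (hN : N.SmoothOn S) (j : Fin n) :
    ContDiffOn ℝ (⊤ : ℕ∞) (N.dX j) S :=
  ContDiffOn.prodMk contDiffOn_const (ContDiffOn.prodMk contDiffOn_const
    (contDiffOn_pi.2 fun a => contDiffOn_pi.2 fun i => (hN.2 a i j).neg))

lemma diffAt_of_contDiffOn {f : E m n → E m n} {S : Set (E m n)} {u : E m n}
    (hS : IsOpen S) (hf : ContDiffOn ℝ (⊤ : ℕ∞) f S) (hu : u ∈ S) : DifferentiableAt ℝ f u :=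
  (hf.contDiffAt (hS.mem_nhds hu)).differentiableAt (by simp)

lemma diffAt_of_contDiffOn' {f : E m n → ℝ} {S : Set (E m n)} {u : E m n}
    (hS : IsOpen S) (hf : ContDiffOn ℝ (⊤ : ℕ∞) f S) (hu : u ∈ S) : DifferentiableAt ℝ f u :=
  (hf.contDiffAt (hS.mem_nhds hu)).differentiableAt (by simp)

lemma ωL_fderiv_dT {N : NLC m n} {S : Set (E m n)} {u : E m n} (hS : IsOpen S)
    (hN : N.SmoothOn S) (hu : u ∈ S) (a : Fin m) (i : Fin n) (c : Fin m) (v : E m n) :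
    ωL N a i u (fderiv ℝ (N.dT c) u v) = -(fderiv ℝ (N.N1 a i c) u v) := by
  have hd : DifferentiableAt ℝ (N.dT c) u := diffAt_of_contDiffOn hS (contDiffOn_dT hN c) hu
  rw [ωL_apply]
  have h1 : ∀ b, (fderiv ℝ (N.dT c) u v).1 b = 0 := by
    intro b
    rw [fderiv_apply_fst hd, show (fun w : E m n => (N.dT c w).1 b)
      = fun _ => (Pi.single c (1:ℝ) : Fin m → ℝ) b from rfl, fderiv_fun_const]
    simp
  have h2 : ∀ j, (fderiv ℝ (N.dT c) u v).2.1 j = 0 := by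
    intro j
    rw [fderiv_apply_x hd, show (fun w : E m n => (N.dT c w).2.1 j)
      = fun _ => (0:ℝ) from rfl, fderiv_fun_const]
    simp
  have h3 : (fderiv ℝ (N.dT c) u v).2.2 a i = -(fderiv ℝ (N.N1 a i c) u v) := by
    rw [fderiv_apply_p hd, show (fun w : E m n => (N.dT c w).2.2 a i)
      = fun w => -(N.N1 a i c w) from rfl, fderiv_fun_neg]
    simp
  simp [h1, h2, h3]

lemma ωL_fderiv_dX {N : NLC m n} {S : Set (E m n)} {u : E m n} (hS : IsOpen S)
    (hN : N.SmoothOn S) (hu : u ∈ S) (a : Fin m) (i : Fin n) (k : Fin n) (v : E m n) :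
    ωL N a i u (fderiv ℝ (N.dX k) u v) = -(fderiv ℝ (N.N2 a i k) u v) := by
  have hd : DifferentiableAt ℝ (N.dX k) u := diffAt_of_contDiffOn hS (contDiffOn_dX hN k) hu
  rw [ωL_apply]
  have h1 : ∀ b, (fderiv ℝ (N.dX k) u v).1 b = 0 := by
    intro b
    rw [fderiv_apply_fst hd, show (fun w : E m n => (N.dX k w).1 b)
      = fun _ => (0:ℝ) from rfl, fderiv_fun_const]
    simp
  have h2 : ∀ j, (fderiv ℝ (N.dX k) u v).2.1 j = 0 := by
    intro j
    rw [fderiv_apply_x hd, show (fun w : E m n => (N.dX k w).2.1 j)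
      = fun _ => (Pi.single k (1:ℝ) : Fin n → ℝ) j from rfl, fderiv_fun_const]
    simp
  have h3 : (fderiv ℝ (N.dX k) u v).2.2 a i = -(fderiv ℝ (N.N2 a i k) u v) := by
    rw [fderiv_apply_p hd, show (fun w : E m n => (N.dX k w).2.2 a i)
      = fun w => -(N.N2 a i k w) from rfl, fderiv_fun_neg]
    simp
  simp [h1, h2, h3]

lemma clm_horiz {N : NLC m n} {u ξ : E m n} (L : E m n →L[ℝ] ℝ)
    (hξ : ξ = (∑ c, ξ.1 c • N.dT c u) + ∑ k, ξ.2.1 k • N.dX k u) :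
    L ξ = (∑ c, ξ.1 c * L (N.dT c u)) + ∑ k, ξ.2.1 k * L (N.dX k u) := by
  conv_lhs => rw [hξ]
  simp [map_add, map_sum, map_smul]

/-- For a smooth horizontal vector field `Y`, the adapted form applied to a derivative of `Y`. -/
lemma ωL_fderiv_horiz {N : NLC m n} {S : Set (E m n)} {u : E m n} (hS : IsOpen S)
    (hN : N.SmoothOn S) {Y : E m n → E m n} (hY : ContDiffOn ℝ (⊤ : ℕ∞) Y S)
    (hYh : ∀ w ∈ S, Y w ∈ N.Hor w) (hu : u ∈ S) (a : Fin m) (i : Fin n) (v : E m n) :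
    ωL N a i u (fderiv ℝ Y u v)
      = -(∑ b, fderiv ℝ (N.N1 a i b) u v * (Y u).1 b)
        - ∑ j, fderiv ℝ (N.N2 a i j) u v * (Y u).2.1 j := by
  have hYd : DifferentiableAt ℝ Y u := diffAt_of_contDiffOn hS hY hu
  have hN1d : ∀ b, DifferentiableAt ℝ (N.N1 a i b) u :=
    fun b => diffAt_of_contDiffOn' hS (hN.1 a i b) hu
  have hN2d : ∀ j, DifferentiableAt ℝ (N.N2 a i j) u :=
    fun j => diffAt_of_contDiffOn' hS (hN.2 a i j) hu
  have hYt : ∀ b, DifferentiableAt ℝ (fun w => (Y w).1 b) u := fun b => diffAt_fst hYd b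
  have hYx : ∀ j, DifferentiableAt ℝ (fun w => (Y w).2.1 j) u := fun j => diffAt_x hYd j
  -- the horizontality identity on S
  have hid : ∀ w ∈ S, (Y w).2.2 a i
      = -(∑ b, N.N1 a i b w * (Y w).1 b) - ∑ j, N.N2 a i j w * (Y w).2.1 j := by
    intro w hw
    have := ((mem_Hor_iff N w (Y w)).1 (hYh w hw)) a i
    rw [ωL_apply] at this
    linarith
  -- derivatives of the two sum functions
  have hs1 : DifferentiableAt ℝ (fun w => ∑ b, N.N1 a i b w * (Y w).1 b) u :=
    DifferentiableAt.fun_sum fun b _ => (hN1d b).mul (hYt b)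
  have hs2 : DifferentiableAt ℝ (fun w => ∑ j, N.N2 a i j w * (Y w).2.1 j) u :=
    DifferentiableAt.fun_sum fun j _ => (hN2d j).mul (hYx j)
  have hfd : fderiv ℝ (fun w => (Y w).2.2 a i) u
      = fderiv ℝ (fun w => -(∑ b, N.N1 a i b w * (Y w).1 b)
          - ∑ j, N.N2 a i j w * (Y w).2.1 j) u := by
    apply Filter.EventuallyEq.fderiv_eq
    exact Filter.eventuallyEq_of_mem (hS.mem_nhds hu) hid
  have hg : fderiv ℝ (fun w => (Y w).2.2 a i) u v
      = -(∑ b, (fderiv ℝ (N.N1 a i b) u v * (Y u).1 b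
            + N.N1 a i b u * fderiv ℝ (fun w => (Y w).1 b) u v))
        - ∑ j, (fderiv ℝ (N.N2 a i j) u v * (Y u).2.1 j
            + N.N2 a i j u * fderiv ℝ (fun w => (Y w).2.1 j) u v) := by
    rw [hfd, fderiv_fun_sub (f := fun w => -∑ b, N.N1 a i b w * (Y w).1 b) hs1.neg hs2, fderiv_fun_neg,
      fderiv_fun_sum (A := fun b w => N.N1 a i b w * (Y w).1 b) (fun b _ => (hN1d b).mul (hYt b)),
      fderiv_fun_sum (A := fun j w => N.N2 a i j w * (Y w).2.1 j) (fun j _ => (hN2d j).mul (hYx j))]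
    simp only [ContinuousLinearMap.sub_apply, ContinuousLinearMap.neg_apply,
      ContinuousLinearMap.coe_sum', Finset.sum_apply]
    congr 1
    · congr 1
      refine Finset.sum_congr rfl fun b _ => ?_
      rw [fderiv_fun_mul (hN1d b) (hYt b)]
      simp only [ContinuousLinearMap.add_apply, ContinuousLinearMap.smul_apply, smul_eq_mul]
      ring
    · refine Finset.sum_congr rfl fun j _ => ?_
      rw [fderiv_fun_mul (hN2d j) (hYx j)]
      simp only [ContinuousLinearMap.add_apply, ContinuousLinearMap.smul_apply, smul_eq_mul]
      ring
  rw [ωL_apply, fderiv_apply_p hYd a i v, hg]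
  simp only [← fderiv_apply_fst hYd, ← fderiv_apply_x hYd]
  rw [Finset.sum_add_distrib, Finset.sum_add_distrib]
  ring

end Stmt5Aux
end Helpers

section Statements

open scoped BigOperators

theorem stmt5 (m n : ℕ) (U : Set (Fin m → ℝ)) (V : Set (Fin n → ℝ))
    (hU : IsOpen U) (hV : IsOpen V) (N : NLC m n) (hN : N.SmoothOn (modelSet U V)) :
    (∀ X Y : E m n → E m n,
        ContDiffOn ℝ (⊤ : ℕ∞) X (modelSet U V) → ContDiffOn ℝ (⊤ : ℕ∞) Y (modelSet U V) →
        (∀ u ∈ modelSet U V, X u ∈ N.Hor u) → (∀ u ∈ modelSet U V, Y u ∈ N.Hor u) →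
        ∀ u ∈ modelSet U V, lie X Y u ∈ N.Hor u)
    ↔ (∀ u ∈ modelSet U V,
        (∀ (a : Fin m) (i : Fin n) (b c : Fin m), N.R1 a i b c u = 0)
        ∧ (∀ (a : Fin m) (i : Fin n) (b : Fin m) (k : Fin n), N.Rmix a i b k u = 0)
        ∧ (∀ (a : Fin m) (i j k : Fin n), N.R2 a i j k u = 0)) := by
  classical
  have hS : IsOpen (modelSet U V) := Stmt5Aux.isOpen_modelSet hU hV
  constructor
  · intro hInv u hu
    refine ⟨?_, ?_, ?_⟩
    · intro a i b c
      have hlie := hInv (N.dT b) (N.dT c) (Stmt5Aux.contDiffOn_dT hN b)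
        (Stmt5Aux.contDiffOn_dT hN c)
        (fun w _ => Submodule.subset_span (Or.inl ⟨b, rfl⟩))
        (fun w _ => Submodule.subset_span (Or.inl ⟨c, rfl⟩)) u hu
      have h0 := (Stmt5Aux.mem_Hor_iff N u _).1 hlie a i
      simp only [lie, map_sub, Stmt5Aux.ωL_fderiv_dT hS hN hu a i] at h0
      rw [NLC.R1, NLC.delT, NLC.delT]
      linarith
    · intro a i b k
      have hlie := hInv (N.dT b) (N.dX k) (Stmt5Aux.contDiffOn_dT hN b)
        (Stmt5Aux.contDiffOn_dX hN k)
        (fun w _ => Submodule.subset_span (Or.inl ⟨b, rfl⟩))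
        (fun w _ => Submodule.subset_span (Or.inr ⟨k, rfl⟩)) u hu
      have h0 := (Stmt5Aux.mem_Hor_iff N u _).1 hlie a i
      simp only [lie, map_sub, Stmt5Aux.ωL_fderiv_dT hS hN hu a i,
        Stmt5Aux.ωL_fderiv_dX hS hN hu a i] at h0
      rw [NLC.Rmix, NLC.delT, NLC.delX]
      linarith
    · intro a i j k
      have hlie := hInv (N.dX j) (N.dX k) (Stmt5Aux.contDiffOn_dX hN j)
        (Stmt5Aux.contDiffOn_dX hN k)
        (fun w _ => Submodule.subset_span (Or.inr ⟨j, rfl⟩))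
        (fun w _ => Submodule.subset_span (Or.inr ⟨k, rfl⟩)) u hu
      have h0 := (Stmt5Aux.mem_Hor_iff N u _).1 hlie a i
      simp only [lie, map_sub, Stmt5Aux.ωL_fderiv_dX hS hN hu a i] at h0
      rw [NLC.R2, NLC.delX, NLC.delX]
      linarith
  · intro hR X Y hX hY hXh hYh u hu
    rw [Stmt5Aux.mem_Hor_iff]
    intro a i
    have hkeyY := Stmt5Aux.ωL_fderiv_horiz hS hN hY hYh hu a i (X u)
    have hkeyX := Stmt5Aux.ωL_fderiv_horiz hS hN hX hXh hu a i (Y u)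
    have hXdec : X u = (∑ c, (X u).1 c • N.dT c u) + ∑ k, (X u).2.1 k • N.dX k u :=
      Stmt5Aux.horiz_decomp N u (X u) ((Stmt5Aux.mem_Hor_iff N u (X u)).1 (hXh u hu))
    have hYdec : Y u = (∑ c, (Y u).1 c • N.dT c u) + ∑ k, (Y u).2.1 k • N.dX k u :=
      Stmt5Aux.horiz_decomp N u (Y u) ((Stmt5Aux.mem_Hor_iff N u (Y u)).1 (hYh u hu))
    have hd1X : ∀ b, fderiv ℝ (N.N1 a i b) u (X u)
        = (∑ c, (X u).1 c * fderiv ℝ (N.N1 a i b) u (N.dT c u))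
          + ∑ k, (X u).2.1 k * fderiv ℝ (N.N1 a i b) u (N.dX k u) :=
      fun b => Stmt5Aux.clm_horiz _ hXdec
    have hd1Y : ∀ b, fderiv ℝ (N.N1 a i b) u (Y u)
        = (∑ c, (Y u).1 c * fderiv ℝ (N.N1 a i b) u (N.dT c u))
          + ∑ k, (Y u).2.1 k * fderiv ℝ (N.N1 a i b) u (N.dX k u) :=
      fun b => Stmt5Aux.clm_horiz _ hYdec
    have hd2X : ∀ j, fderiv ℝ (N.N2 a i j) u (X u)
        = (∑ c, (X u).1 c * fderiv ℝ (N.N2 a i j) u (N.dT c u))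
          + ∑ k, (X u).2.1 k * fderiv ℝ (N.N2 a i j) u (N.dX k u) :=
      fun j => Stmt5Aux.clm_horiz _ hXdec
    have hd2Y : ∀ j, fderiv ℝ (N.N2 a i j) u (Y u)
        = (∑ c, (Y u).1 c * fderiv ℝ (N.N2 a i j) u (N.dT c u))
          + ∑ k, (Y u).2.1 k * fderiv ℝ (N.N2 a i j) u (N.dX k u) :=
      fun j => Stmt5Aux.clm_horiz _ hYdec
    obtain ⟨h1, h2, h3⟩ := hR u hu
    have hsym1 : ∀ b c, fderiv ℝ (N.N1 a i b) u (N.dT c u)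
        = fderiv ℝ (N.N1 a i c) u (N.dT b u) := by
      intro b c
      have := h1 a i b c
      rw [NLC.R1, NLC.delT, NLC.delT] at this
      linarith
    have hsym2 : ∀ b k, fderiv ℝ (N.N1 a i b) u (N.dX k u)
        = fderiv ℝ (N.N2 a i k) u (N.dT b u) := by
      intro b k
      have := h2 a i b k
      rw [NLC.Rmix, NLC.delX, NLC.delT] at this
      linarith
    have hsym3 : ∀ j k, fderiv ℝ (N.N2 a i j) u (N.dX k u)
        = fderiv ℝ (N.N2 a i k) u (N.dX j u) := by
      intro j k
      have := h3 a i j k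
      rw [NLC.R2, NLC.delX, NLC.delX] at this
      linarith
    simp only [lie, map_sub, hkeyY, hkeyX, hd1X, hd1Y, hd2X, hd2Y, add_mul,
      Finset.sum_mul, Finset.sum_add_distrib]
    have eA : (∑ x : Fin m, ∑ y : Fin m, (Y u).1 y * fderiv ℝ (N.N1 a i x) u (N.dT y u) * (X u).1 x)
        = ∑ x : Fin m, ∑ y : Fin m, (X u).1 y * fderiv ℝ (N.N1 a i x) u (N.dT y u) * (Y u).1 x := by
      rw [Finset.sum_comm]
      refine Finset.sum_congr rfl fun x _ => Finset.sum_congr rfl fun y _ => ?_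
      rw [hsym1 y x]; ring
    have eD : (∑ x : Fin n, ∑ y : Fin n, (Y u).2.1 y * fderiv ℝ (N.N2 a i x) u (N.dX y u) * (X u).2.1 x)
        = ∑ x : Fin n, ∑ y : Fin n, (X u).2.1 y * fderiv ℝ (N.N2 a i x) u (N.dX y u) * (Y u).2.1 x := by
      rw [Finset.sum_comm]
      refine Finset.sum_congr rfl fun x _ => Finset.sum_congr rfl fun y _ => ?_
      rw [hsym3 y x]; ring
    have eC : (∑ x : Fin n, ∑ y : Fin m, (X u).1 y * fderiv ℝ (N.N2 a i x) u (N.dT y u) * (Y u).2.1 x)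
        = ∑ b : Fin m, ∑ k : Fin n, (Y u).2.1 k * fderiv ℝ (N.N1 a i b) u (N.dX k u) * (X u).1 b := by
      rw [Finset.sum_comm]
      refine Finset.sum_congr rfl fun b _ => Finset.sum_congr rfl fun k _ => ?_
      rw [← hsym2 b k]; ring
    have eC' : (∑ x : Fin n, ∑ y : Fin m, (Y u).1 y * fderiv ℝ (N.N2 a i x) u (N.dT y u) * (X u).2.1 x)
        = ∑ b : Fin m, ∑ k : Fin n, (X u).2.1 k * fderiv ℝ (N.N1 a i b) u (N.dX k u) * (Y u).1 b := by
      rw [Finset.sum_comm]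
      refine Finset.sum_congr rfl fun b _ => Finset.sum_congr rfl fun k _ => ?_
      rw [← hsym2 b k]; ring
    linarith [eA, eD, eC, eC']

end Statements
end

section
/- Let N be a nonlinear connection on E with almost product structure ℙ and adapted projections h_T, h_M, w. Then the Nijenhuis tensor of ℙ satisfies, for all smooth vector fields X, Y on E: 𝒩_ℙ(h_T X, h_T Y) = 4·w[h_T X, h_T Y], 𝒩_ℙ(h_T X, h_M Y) = 4·w[h_T X, h_M Y], 𝒩_ℙ(h_M X, h_M Y) = 4·w[h_M X, h_M Y], 𝒩_ℙ(h_T X, wY) = 0, 𝒩_ℙ(h_M X, wY) = 0, and 𝒩_ℙ(wX, wY) = 0. -/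
section Statements

open scoped BigOperators

section Aux

variable {m n : ℕ}

lemma apP_apP' (N : NLC m n) (u ξ : E m n) : N.apP u (N.apP u ξ) = ξ := by
  unfold NLC.apP
  refine Prod.ext rfl (Prod.ext rfl ?_)
  funext a i
  ring

lemma apP_neg' (N : NLC m n) (u ξ : E m n) : N.apP u (-ξ) = -(N.apP u ξ) := by
  unfold NLC.apP
  refine Prod.ext rfl (Prod.ext rfl ?_)
  funext a i
  simp [mul_neg, Finset.sum_neg_distrib]
  ring

lemma PF_PF' (N : NLC m n) (Z : E m n → E m n) : N.PF (N.PF Z) = Z :=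
  funext fun u => apP_apP' N u (Z u)

lemma PF_hTF' (N : NLC m n) (X : E m n → E m n) : N.PF (N.hTF X) = N.hTF X := by
  funext u
  unfold NLC.PF NLC.hTF NLC.apP NLC.hT
  refine Prod.ext rfl (Prod.ext rfl ?_)
  funext a i
  simp [mul_zero]
  ring

lemma PF_hMF' (N : NLC m n) (X : E m n → E m n) : N.PF (N.hMF X) = N.hMF X := by
  funext u
  unfold NLC.PF NLC.hMF NLC.apP NLC.hM
  refine Prod.ext rfl (Prod.ext rfl ?_)
  funext a i
  simp [mul_zero]
  ring

lemma PF_wF' (N : NLC m n) (X : E m n → E m n) :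
    N.PF (N.wF X) = fun u => -(N.wF X u) := by
  funext u
  unfold NLC.PF NLC.wF NLC.apP NLC.w
  refine Prod.ext (by simp) (Prod.ext (by simp) ?_)
  funext a i
  simp [mul_zero]

lemma lie_neg_right' (X Y : E m n → E m n) :
    lie X (fun u => -(Y u)) = fun u => -(lie X Y u) := by
  funext u
  unfold lie
  rw [fderiv_fun_neg]
  simp only [ContinuousLinearMap.neg_apply, map_neg]
  abel

lemma lie_neg_left' (X Y : E m n → E m n) :
    lie (fun u => -(X u)) Y = fun u => -(lie X Y u) := by
  funext u
  unfold lie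
  rw [fderiv_fun_neg]
  simp only [ContinuousLinearMap.neg_apply, map_neg]
  abel

lemma lie_neg_neg' (X Y : E m n → E m n) :
    lie (fun u => -(X u)) (fun u => -(Y u)) = lie X Y := by
  funext u
  unfold lie
  rw [fderiv_fun_neg, fderiv_fun_neg]
  simp only [ContinuousLinearMap.neg_apply, map_neg, neg_neg]

lemma PF_negF' (N : NLC m n) (Z : E m n → E m n) (u : E m n) :
    N.PF (fun v => -(Z v)) u = -(N.PF Z u) := apP_neg' N u (Z u)

/-- derivative of a field with vanishing first two components has vanishing
first two components -/
lemma fderiv_vert' (Z : E m n → E m n) (h1 : ∀ u, (Z u).1 = 0)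
    (h2 : ∀ u, (Z u).2.1 = 0) (u v : E m n) :
    (fderiv ℝ Z u v).1 = 0 ∧ (fderiv ℝ Z u v).2.1 = 0 := by
  by_cases hd : DifferentiableAt ℝ Z u
  · constructor
    · have hfst : HasFDerivAt (fun u => (Z u).1)
          ((ContinuousLinearMap.fst ℝ (Fin m → ℝ) ((Fin n → ℝ) × (Fin m → Fin n → ℝ))).comp
            (fderiv ℝ Z u)) u := hd.hasFDerivAt.fst
      have h0 : (fun u : E m n => (Z u).1) = fun _ => (0 : Fin m → ℝ) := funext h1
      rw [h0] at hfst
      have := hfst.unique (hasFDerivAt_const (0 : Fin m → ℝ) u)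
      have hv := congrArg (fun L => L v) this
      simpa using hv
    · have hsnd : HasFDerivAt (fun u => (Z u).2)
          ((ContinuousLinearMap.snd ℝ (Fin m → ℝ) ((Fin n → ℝ) × (Fin m → Fin n → ℝ))).comp
            (fderiv ℝ Z u)) u := hd.hasFDerivAt.snd
      have hfst : HasFDerivAt (fun u => (Z u).2.1)
          ((ContinuousLinearMap.fst ℝ (Fin n → ℝ) (Fin m → Fin n → ℝ)).comp
            ((ContinuousLinearMap.snd ℝ (Fin m → ℝ)
              ((Fin n → ℝ) × (Fin m → Fin n → ℝ))).comp (fderiv ℝ Z u))) u := hsnd.fst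
      have h0 : (fun u : E m n => (Z u).2.1) = fun _ => (0 : Fin n → ℝ) := funext h2
      rw [h0] at hfst
      have := hfst.unique (hasFDerivAt_const (0 : Fin n → ℝ) u)
      have hv := congrArg (fun L => L v) this
      simpa using hv
  · rw [fderiv_zero_of_not_differentiableAt hd]
    simp

lemma key_hh' (N : NLC m n) (u ξ : E m n) :
    ξ + ξ - N.apP u ξ - N.apP u ξ = (4 : ℝ) • N.w u ξ := by
  unfold NLC.apP NLC.w
  refine Prod.ext ?_ (Prod.ext ?_ ?_)
  · show ξ.1 + ξ.1 - ξ.1 - ξ.1 = (4 : ℝ) • (0 : Fin m → ℝ)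
    simp
  · show ξ.2.1 + ξ.2.1 - ξ.2.1 - ξ.2.1 = (4 : ℝ) • (0 : Fin n → ℝ)
    simp
  · funext a i
    show ξ.2.2 a i + ξ.2.2 a i - _ - _ = _
    simp only [Prod.smul_snd, Pi.smul_apply, smul_eq_mul, Pi.sub_apply, Pi.add_apply]
    ring

lemma key_ww' (N : NLC m n) (u ξ : E m n) (h1 : ξ.1 = 0) (h2 : ξ.2.1 = 0) :
    ξ + ξ + N.apP u ξ + N.apP u ξ = 0 := by
  unfold NLC.apP
  refine Prod.ext ?_ (Prod.ext ?_ ?_)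
  · show ξ.1 + ξ.1 + ξ.1 + ξ.1 = 0
    rw [h1]; simp
  · show ξ.2.1 + ξ.2.1 + ξ.2.1 + ξ.2.1 = 0
    rw [h2]; simp
  · funext a i
    show ξ.2.2 a i + ξ.2.2 a i
        + (-(ξ.2.2 a i) - 2 * (∑ b, N.N1 a i b u * ξ.1 b)
          - 2 * (∑ j, N.N2 a i j u * ξ.2.1 j))
        + (-(ξ.2.2 a i) - 2 * (∑ b, N.N1 a i b u * ξ.1 b)
          - 2 * (∑ j, N.N2 a i j u * ξ.2.1 j)) = 0
    rw [h1, h2]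
    simp

end Aux

theorem stmt7 (m n : ℕ) (U : Set (Fin m → ℝ)) (V : Set (Fin n → ℝ))
    (hU : IsOpen U) (hV : IsOpen V) (N : NLC m n) (hN : N.SmoothOn (modelSet U V))
    (X Y : E m n → E m n)
    (hX : ContDiffOn ℝ (⊤ : ℕ∞) X (modelSet U V)) (hY : ContDiffOn ℝ (⊤ : ℕ∞) Y (modelSet U V)) :
    ∀ u ∈ modelSet U V,
      Nij N (N.hTF X) (N.hTF Y) u = (4 : ℝ) • N.wF (lie (N.hTF X) (N.hTF Y)) u
      ∧ Nij N (N.hTF X) (N.hMF Y) u = (4 : ℝ) • N.wF (lie (N.hTF X) (N.hMF Y)) u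
      ∧ Nij N (N.hMF X) (N.hMF Y) u = (4 : ℝ) • N.wF (lie (N.hMF X) (N.hMF Y)) u
      ∧ Nij N (N.hTF X) (N.wF Y) u = 0
      ∧ Nij N (N.hMF X) (N.wF Y) u = 0
      ∧ Nij N (N.wF X) (N.wF Y) u = 0 := by
  intro u _
  refine ⟨?_, ?_, ?_, ?_, ?_, ?_⟩
  · -- hT, hT
    unfold Nij
    rw [PF_hTF', PF_hTF', PF_PF']
    show lie (N.hTF X) (N.hTF Y) u + lie (N.hTF X) (N.hTF Y) u
      - N.apP u (lie (N.hTF X) (N.hTF Y) u) - N.apP u (lie (N.hTF X) (N.hTF Y) u)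
      = (4 : ℝ) • N.w u (lie (N.hTF X) (N.hTF Y) u)
    exact key_hh' N u _
  · -- hT, hM
    unfold Nij
    rw [PF_hTF', PF_hMF', PF_PF']
    show lie (N.hTF X) (N.hMF Y) u + lie (N.hTF X) (N.hMF Y) u
      - N.apP u (lie (N.hTF X) (N.hMF Y) u) - N.apP u (lie (N.hTF X) (N.hMF Y) u)
      = (4 : ℝ) • N.w u (lie (N.hTF X) (N.hMF Y) u)
    exact key_hh' N u _
  · -- hM, hM
    unfold Nij
    rw [PF_hMF' N X, PF_hMF' N Y, PF_PF']
    show lie (N.hMF X) (N.hMF Y) u + lie (N.hMF X) (N.hMF Y) u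
      - N.apP u (lie (N.hMF X) (N.hMF Y) u) - N.apP u (lie (N.hMF X) (N.hMF Y) u)
      = (4 : ℝ) • N.w u (lie (N.hMF X) (N.hMF Y) u)
    exact key_hh' N u _
  · -- hT, w
    unfold Nij
    rw [PF_hTF', PF_wF', PF_PF', lie_neg_right']
    show lie (N.hTF X) (N.wF Y) u + (-(lie (N.hTF X) (N.wF Y) u))
      - N.apP u (lie (N.hTF X) (N.wF Y) u)
      - N.apP u (-(lie (N.hTF X) (N.wF Y) u)) = 0
    rw [apP_neg']
    abel
  · -- hM, w
    unfold Nij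
    rw [PF_hMF', PF_wF', PF_PF', lie_neg_right']
    show lie (N.hMF X) (N.wF Y) u + (-(lie (N.hMF X) (N.wF Y) u))
      - N.apP u (lie (N.hMF X) (N.wF Y) u)
      - N.apP u (-(lie (N.hMF X) (N.wF Y) u)) = 0
    rw [apP_neg']
    abel
  · -- w, w
    unfold Nij
    rw [PF_wF' N X, PF_wF' N Y, PF_PF', lie_neg_neg',
      lie_neg_left' (N.wF X) (N.wF Y), lie_neg_right' (N.wF X) (N.wF Y),
      PF_negF']
    have h1 : (lie (N.wF X) (N.wF Y) u).1 = 0 := by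
      have hY := fderiv_vert' (N.wF Y) (fun _ => rfl) (fun _ => rfl) u (N.wF X u)
      have hX := fderiv_vert' (N.wF X) (fun _ => rfl) (fun _ => rfl) u (N.wF Y u)
      show (fderiv ℝ (N.wF Y) u (N.wF X u) - fderiv ℝ (N.wF X) u (N.wF Y u)).1 = 0
      rw [Prod.fst_sub, hY.1, hX.1, sub_zero]
    have h2 : (lie (N.wF X) (N.wF Y) u).2.1 = 0 := by
      have hY := fderiv_vert' (N.wF Y) (fun _ => rfl) (fun _ => rfl) u (N.wF X u)
      have hX := fderiv_vert' (N.wF X) (fun _ => rfl) (fun _ => rfl) u (N.wF Y u)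
      show ((fderiv ℝ (N.wF Y) u (N.wF X u) - fderiv ℝ (N.wF X) u (N.wF Y u)).2).1 = 0
      rw [Prod.snd_sub, Prod.fst_sub, hY.2, hX.2, sub_zero]
    have hkey := key_ww' N u (lie (N.wF X) (N.wF Y) u) h1 h2
    have hPF : N.PF (lie (N.wF X) (N.wF Y)) u
        = N.apP u (lie (N.wF X) (N.wF Y) u) := rfl
    rw [hPF, sub_neg_eq_add, sub_neg_eq_add]
    exact hkey

end Statements
end
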